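/- arXiv:2309.13616 — 5 statements merged into one kernel-verified Lean document; each statement's English description precedes it below -/
import Mathlib

section
/- Let Ω ⊂ ℝ² be a simply connected planar domain with non-empty boundary, let φ : Ω' → Ω be a conformal mapping from a bounded simply connected domain Ω', and let h(x,y) = J_{φ^{-1}}(x,y) = |(φ^{-1})'(x,y)|² be the associated conformal weight on Ω. Then for every r ≥ 2 and every function f ∈ W^{1,2}_0(Ω), the weighted Poincaré–Sobolev inequality (∬_Ω |f(x,y)|^r h(x,y) dx dy)^{1/r} ≤ A_{r,2}(h,Ω) (∬_Ω |∇f(x,y)|² dx dy)^{1/2} holds with a constant satisfying A_{r,2}(h,Ω) ≤ A_{r,2}(Ω'), where A_{r,2}(Ω') is the best constant in the (non-weighted) Poincaré–Sobolev inequality ‖g‖_{L^r(Ω')} ≤ A_{r,2}(Ω') ‖∇g‖_{L²(Ω')} for g ∈ W^{1,2}_0(Ω'). -/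
open MeasureTheory Real Set
open scoped ENNReal NNReal

noncomputable section

/-- A smooth real-valued function compactly supported inside `Ω`
(the test functions whose closure in the corresponding (semi-)norm gives
`W^{1,2}_0(Ω)`, resp. `L^{1,2}_0(Ω)`). -/
def IsTestFun (Ω : Set ℂ) (f : ℂ → ℝ) : Prop :=
  ContDiff ℝ (⊤ : ℕ∞) f ∧ HasCompactSupport f ∧ tsupport f ⊆ Ω

/-- A conformal mapping of `Ω'` onto `Ω`: a holomorphic bijection of `Ω'`
onto `Ω` with nonvanishing derivative. -/
def ConformalOn (φ : ℂ → ℂ) (Ω' Ω : Set ℂ) : Prop :=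
  DifferentiableOn ℂ φ Ω' ∧ Set.InjOn φ Ω' ∧ φ '' Ω' = Ω ∧ ∀ z ∈ Ω', deriv φ z ≠ 0

/-- The first Dirichlet eigenvalue of the Laplacian on `Ω`, as the infimum of the
Rayleigh quotients over (a dense class of) nonzero functions of `W^{1,2}_0(Ω)`. -/
def firstEigenvalue (Ω : Set ℂ) : ℝ :=
  sInf ((fun f => (∫ z in Ω, ‖fderiv ℝ f z‖ ^ 2) / (∫ z in Ω, (f z) ^ 2)) ''
    {f : ℂ → ℝ | IsTestFun Ω f ∧ f ≠ 0})

/-- The best constant `A_{r,2}(Ω)` in the Poincaré–Sobolev inequality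
`‖f‖_{L^r(Ω)} ≤ A ‖∇f‖_{L²(Ω)}` for `f ∈ W^{1,2}_0(Ω)`. -/
def bestPSConst (Ω : Set ℂ) (r : ℝ) : ℝ :=
  sInf {A : ℝ | 0 ≤ A ∧ ∀ f : ℂ → ℝ, IsTestFun Ω f →
    (∫ z in Ω, |f z| ^ r) ^ (1 / r) ≤ A * (∫ z in Ω, ‖fderiv ℝ f z‖ ^ 2) ^ (1/2 : ℝ)}

/-- The `L^∞(D)`-norm (essential supremum of the modulus) of `g : ℂ → ℂ` on `D`. -/
def linfNorm (D : Set ℂ) (g : ℂ → ℂ) : ℝ :=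
  (essSup (fun z => (‖g z‖₊ : ℝ≥0∞)) (volume.restrict D)).toReal


/-- Real-linear multiplication-by-`c` map on `ℂ`. -/
def Mc (c : ℂ) : ℂ →L[ℝ] ℂ :=
  (ContinuousLinearMap.smulRight (1 : ℂ →L[ℂ] ℂ) c).restrictScalars ℝ

lemma Mc_apply (c z : ℂ) : Mc c z = z * c := by
  simp [Mc]

lemma Mc_det (c : ℂ) : (Mc c).det = Complex.normSq c := by
  have h : ((Mc c : ℂ →L[ℝ] ℂ) : ℂ →ₗ[ℝ] ℂ) = Algebra.lmul ℝ ℂ c := by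
    ext x
    simp [Mc, mul_comm]
  rw [ContinuousLinearMap.det, h, ← Algebra.norm_apply, Algebra.norm_complex_apply]

lemma Mc_norm (c : ℂ) : ‖Mc c‖ = ‖c‖ := by
  rw [Mc, ContinuousLinearMap.norm_restrictScalars, ContinuousLinearMap.norm_smulRight_apply,
    norm_one, one_mul]

lemma norm_comp_Mc (L : ℂ →L[ℝ] ℝ) {c : ℂ} (hc : c ≠ 0) : ‖L.comp (Mc c)‖ = ‖L‖ * ‖c‖ := by
  apply le_antisymm
  · calc ‖L.comp (Mc c)‖ ≤ ‖L‖ * ‖Mc c‖ := ContinuousLinearMap.opNorm_comp_le _ _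
      _ = ‖L‖ * ‖c‖ := by rw [Mc_norm]
  · have hL : L = (L.comp (Mc c)).comp (Mc c⁻¹) := by
      ext z
      simp [Mc_apply, ContinuousLinearMap.comp_apply]
      congr 1
      field_simp
    have hcpos : 0 < ‖c‖ := norm_pos_iff.mpr hc
    calc ‖L‖ * ‖c‖ = ‖(L.comp (Mc c)).comp (Mc c⁻¹)‖ * ‖c‖ := by rw [← hL]
      _ ≤ (‖L.comp (Mc c)‖ * ‖Mc c⁻¹‖) * ‖c‖ := by
          gcongr; exact ContinuousLinearMap.opNorm_comp_le _ _
      _ = ‖L.comp (Mc c)‖ := by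
          rw [Mc_norm, norm_inv]
          rw [mul_assoc, inv_mul_cancel₀ hcpos.ne', mul_one]

/-- Change of variables for a holomorphic injection. -/
lemma cov_holo {Ω' : Set ℂ} {φ : ℂ → ℂ} (hΩ' : IsOpen Ω')
    (hφd : DifferentiableOn ℂ φ Ω') (hinj : Set.InjOn φ Ω') (G : ℂ → ℝ) :
    ∫ w in φ '' Ω', G w = ∫ x in Ω', Complex.normSq (deriv φ x) * G (φ x) := by
  have h : ∀ x ∈ Ω', HasFDerivWithinAt φ (Mc (deriv φ x)) Ω' x := fun x hx =>
    ((((hφd x hx).differentiableAt (hΩ'.mem_nhds hx)).hasDerivAt.hasFDerivAt).restrictScalars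
      ℝ).hasFDerivWithinAt
  rw [integral_image_eq_integral_abs_det_fderiv_smul volume hΩ'.measurableSet h hinj G]
  apply setIntegral_congr_fun hΩ'.measurableSet
  intro x _
  simp only []
  rw [Mc_det, abs_of_nonneg (Complex.normSq_nonneg _), smul_eq_mul]

lemma exists_PS_const (Ω' : Set ℂ) (hb : Bornology.IsBounded Ω') (r : ℝ) (hr : 2 ≤ r) :
    ∃ A : ℝ, 0 ≤ A ∧ ∀ u : ℂ → ℝ, IsTestFun Ω' u →
      (∫ z in Ω', |u z| ^ r) ^ (1 / r) ≤ A * (∫ z in Ω', ‖fderiv ℝ u z‖ ^ 2) ^ (1/2 : ℝ) := by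
  have hr0 : (0:ℝ) < r := by linarith
  -- exponents
  set p : ℝ≥0 := (r.toNNReal⁻¹ + 2⁻¹)⁻¹ with hp_def
  set q : ℝ≥0 := r.toNNReal with hq_def
  have hqr : (q : ℝ) = r := Real.coe_toNNReal r hr0.le
  have hq0 : q ≠ 0 := by
    simp [hq_def, Real.toNNReal_eq_zero]; linarith
  have hqinv : (q:ℝ≥0)⁻¹ ≤ 2⁻¹ := by
    rw [← NNReal.coe_le_coe]
    push_cast [hqr]
    rw [inv_le_inv₀ hr0 (by norm_num)]
    exact hr
  have hpinv_pos : (0:ℝ≥0) < q⁻¹ + 2⁻¹ := by positivity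
  have hp1 : 1 ≤ p := by
    rw [hp_def, one_le_inv_iff₀]
    constructor
    · exact hpinv_pos
    · calc q⁻¹ + 2⁻¹ ≤ 2⁻¹ + 2⁻¹ := by gcongr
        _ = 1 := by rw [← NNReal.coe_inj]; push_cast; norm_num
  have h2p : p < Module.finrank ℝ ℂ := by
    rw [Complex.finrank_real_complex, hp_def]
    have h1 : (2:ℝ≥0)⁻¹ < q⁻¹ + 2⁻¹ := by
      have : (0:ℝ≥0) < q⁻¹ := by positivity
      exact lt_add_of_pos_left _ this
    calc (q⁻¹ + 2⁻¹)⁻¹ < (2⁻¹ : ℝ≥0)⁻¹ := by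
          exact inv_strictAnti₀ (by positivity) h1
      _ = 2 := by norm_num
  have hpq : (p:ℝ)⁻¹ - ((Module.finrank ℝ ℂ : ℝ))⁻¹ ≤ ((q:ℝ))⁻¹ := by
    rw [Complex.finrank_real_complex]
    have : (p:ℝ)⁻¹ = (q:ℝ)⁻¹ + 2⁻¹ := by
      rw [hp_def]; push_cast; rw [inv_inv]
    rw [this]; push_cast; ring_nf; norm_num
  -- the GNS constant
  set C1 : ℝ≥0 := eLpNormLESNormFDerivOfLeConst ℝ (volume : Measure ℂ) Ω' p q with hC1
  set C2 : ℝ≥0∞ := (C1 : ℝ≥0∞) * (volume (closure Ω')) ^ ((p:ℝ)⁻¹ - 2⁻¹) with hC2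
  have hvol : volume (closure Ω') ≠ ∞ := hb.closure.measure_lt_top.ne
  have hC2fin : C2 ≠ ∞ := by
    apply ENNReal.mul_ne_top ENNReal.coe_ne_top
    exact (ENNReal.rpow_ne_top_of_nonneg (by
      have : (p:ℝ)⁻¹ = (q:ℝ)⁻¹ + 2⁻¹ := by rw [hp_def]; push_cast; rw [inv_inv]
      rw [this]
      have h1 : (0:ℝ) ≤ (q:ℝ)⁻¹ := by positivity
      linarith) hvol)
  refine ⟨C2.toReal, ENNReal.toReal_nonneg, fun u hu => ?_⟩
  obtain ⟨husm, hucs, husupp⟩ := hu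
  have husupp' : Function.support u ⊆ Ω' := subset_trans (subset_tsupport u) husupp
  have hu1 : ContDiff ℝ 1 u := husm.of_le (by exact_mod_cast le_top)
  -- GNS inequality
  have key : eLpNorm u q (volume : Measure ℂ) ≤
      eLpNormLESNormFDerivOfLeConst ℝ (volume : Measure ℂ) Ω' p q *
        eLpNorm (fderiv ℝ u) p (volume : Measure ℂ) :=
    eLpNorm_le_eLpNorm_fderiv_of_le (volume : Measure ℂ) hu1 husupp' hp1 h2p hpq hb
  -- facts about the derivative
  have hfd_cont : Continuous (fderiv ℝ u) := (hu1.continuous_fderiv one_ne_zero)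
  have hfd_cs : HasCompactSupport (fderiv ℝ u) := hucs.fderiv (𝕜 := ℝ)
  have hfd_supp : Function.support (fderiv ℝ u) ⊆ Ω' :=
    (support_fderiv_subset ℝ).trans husupp
  -- Hölder step
  have hple2 : (p : ℝ≥0∞) ≤ 2 := by
    have : p ≤ 2 := by
      have := h2p; rw [Complex.finrank_real_complex] at this; exact_mod_cast this.le
    exact_mod_cast this
  have holder : eLpNorm (fderiv ℝ u) p (volume : Measure ℂ) ≤
      eLpNorm (fderiv ℝ u) 2 (volume : Measure ℂ) * (volume (closure Ω')) ^ ((p:ℝ)⁻¹ - 2⁻¹) := by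
    have hsupc : Function.support (fderiv ℝ u) ⊆ closure Ω' := hfd_supp.trans subset_closure
    rw [← eLpNorm_restrict_eq_of_support_subset (f := fderiv ℝ u) hsupc,
      ← eLpNorm_restrict_eq_of_support_subset (f := fderiv ℝ u) (p := (2:ℝ≥0∞)) hsupc]
    have H := eLpNorm_le_eLpNorm_mul_rpow_measure_univ (p := (p:ℝ≥0∞)) (q := (2:ℝ≥0∞))
      hple2 hfd_cont.aestronglyMeasurable (μ := volume.restrict (closure Ω'))
    simpa [Measure.restrict_apply_univ, ENNReal.coe_toReal, one_div] using H
  have fin2 : eLpNorm (fderiv ℝ u) 2 (volume : Measure ℂ) ≠ ∞ :=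
    (hfd_cont.memLp_of_hasCompactSupport hfd_cs).eLpNorm_lt_top.ne
  have key2 : eLpNorm u q (volume : Measure ℂ) ≤ C2 * eLpNorm (fderiv ℝ u) 2 (volume : Measure ℂ) := by
    calc eLpNorm u q (volume : Measure ℂ)
        ≤ (C1 : ℝ≥0∞) * eLpNorm (fderiv ℝ u) p (volume : Measure ℂ) := key
      _ ≤ (C1 : ℝ≥0∞) * (eLpNorm (fderiv ℝ u) 2 (volume : Measure ℂ) *
            (volume (closure Ω')) ^ ((p:ℝ)⁻¹ - 2⁻¹)) := by gcongr
      _ = C2 * eLpNorm (fderiv ℝ u) 2 (volume : Measure ℂ) := by rw [hC2]; ring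
  -- conversion of the LHS
  have hXl : eLpNorm u q (volume : Measure ℂ) =
      (∫⁻ z in Ω', (‖u z‖₊ : ℝ≥0∞) ^ r) ^ (1/r) := by
    rw [← eLpNorm_restrict_eq_of_support_subset husupp',
      eLpNorm_eq_lintegral_rpow_enorm_toReal (by exact_mod_cast hq0) ENNReal.coe_ne_top]
    simp [ENNReal.coe_toReal, hqr, one_div]
    rfl
  have hXr : ∫ z in Ω', |u z| ^ r = (∫⁻ z in Ω', (‖u z‖₊ : ℝ≥0∞) ^ r).toReal := by
    rw [integral_eq_lintegral_of_nonneg_ae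
      (Filter.Eventually.of_forall fun z => by positivity)
      ((husm.continuous.abs.rpow_const fun z => Or.inr hr0.le).aestronglyMeasurable)]
    congr 1
    apply lintegral_congr
    intro z
    rw [← enorm_eq_nnnorm, Real.enorm_eq_ofReal_abs, ← ENNReal.ofReal_rpow_of_nonneg (abs_nonneg _) hr0.le]
  -- conversion of the RHS
  have hYl : eLpNorm (fderiv ℝ u) 2 (volume : Measure ℂ) =
      (∫⁻ z in Ω', (‖fderiv ℝ u z‖₊ : ℝ≥0∞) ^ (2:ℝ)) ^ (1/2 : ℝ) := by
    rw [← eLpNorm_restrict_eq_of_support_subset (f := fderiv ℝ u) hfd_supp,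
      eLpNorm_eq_lintegral_rpow_enorm_toReal two_ne_zero ENNReal.ofNat_ne_top]
    norm_num
    rfl
  have hYr : ∫ z in Ω', ‖fderiv ℝ u z‖ ^ 2 =
      (∫⁻ z in Ω', (‖fderiv ℝ u z‖₊ : ℝ≥0∞) ^ (2:ℝ)).toReal := by
    rw [integral_eq_lintegral_of_nonneg_ae (f := fun z => ‖fderiv ℝ u z‖ ^ 2)
      (Filter.Eventually.of_forall fun z => by positivity)
      ((hfd_cont.norm.pow 2 : Continuous fun z => ‖fderiv ℝ u z‖ ^ 2).aestronglyMeasurable)]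
    congr 1
    apply lintegral_congr
    intro z
    rw [ENNReal.ofReal_pow (norm_nonneg _), ofReal_norm_eq_enorm, enorm_eq_nnnorm,
      ← ENNReal.rpow_natCast]
    norm_num
  -- put it together
  have final := ENNReal.toReal_mono (ENNReal.mul_ne_top hC2fin fin2) key2
  rw [hXl, hYl, ENNReal.toReal_mul] at final
  rw [hXr, hYr, ENNReal.toReal_rpow, ENNReal.toReal_rpow]
  exact final

/-- Weighted Poincaré–Sobolev inequality with conformal weight
`h = J_{φ⁻¹} = |(φ⁻¹)'|²`: it holds with constant `A_{r,2}(h,Ω) ≤ A_{r,2}(Ω')`. -/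
theorem weighted_poincare_sobolev
    (Ω Ω' : Set ℂ) (φ ψ : ℂ → ℂ)
    (hΩ : IsOpen Ω) (hΩ' : IsOpen Ω')
    (hΩc : IsConnected Ω) (hΩ'c : IsConnected Ω')
    (hΩsc : SimplyConnectedSpace Ω) (hΩ'sc : SimplyConnectedSpace Ω')
    (hfr : (frontier Ω).Nonempty) (hΩ'bdd : Bornology.IsBounded Ω')
    (hφ : ConformalOn φ Ω' Ω)
    -- `ψ = φ⁻¹ : Ω → Ω'` is the (holomorphic) inverse of `φ`
    (hψ : DifferentiableOn ℂ ψ Ω)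
    (hinv : ∀ z ∈ Ω', ψ (φ z) = z) (hinv' : ∀ w ∈ Ω, φ (ψ w) = w)
    (r : ℝ) (hr : 2 ≤ r)
    (f : ℂ → ℝ) (hf : IsTestFun Ω f) :
    (∫ w in Ω, |f w| ^ r * ‖deriv ψ w‖ ^ 2) ^ (1 / r) ≤
      bestPSConst Ω' r * (∫ w in Ω, ‖fderiv ℝ f w‖ ^ 2) ^ (1/2 : ℝ) := by
  classical
  obtain ⟨hφd, hφinj, hφim, hφ'⟩ := hφ
  obtain ⟨hfsm, hfcs, hfsupp⟩ := hf
  have hΩeq : Ω = φ '' Ω' := hφim.symm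
  -- the transported test function
  set K : Set ℂ := tsupport f with hK_def
  have hK : IsCompact K := hfcs
  have hKΩ : K ⊆ Ω := hfsupp
  set K' : Set ℂ := ψ '' K with hK'_def
  have hK' : IsCompact K' := hK.image_of_continuousOn (hψ.continuousOn.mono hKΩ)
  have hK'Ω' : K' ⊆ Ω' := by
    rintro _ ⟨w, hw, rfl⟩
    have hwΩ : w ∈ Ω := hKΩ hw
    rw [hΩeq] at hwΩ
    obtain ⟨z, hz, rfl⟩ := hwΩ
    rwa [hinv z hz]
  set g : ℂ → ℝ := fun z => if z ∈ Ω' then f (φ z) else 0 with hg_def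
  have hgφ : ∀ x ∈ Ω', g x = f (φ x) := fun x hx => if_pos hx
  have hφmem : ∀ x ∈ Ω', φ x ∈ Ω := by
    intro x hx; rw [hΩeq]; exact mem_image_of_mem φ hx
  have hg0 : ∀ z, z ∉ K' → g z = 0 := by
    intro z hz
    by_cases hzΩ' : z ∈ Ω'
    · rw [hgφ z hzΩ']
      by_contra hne
      have : φ z ∈ K := subset_tsupport f (by simpa using hne)
      have : ψ (φ z) ∈ K' := mem_image_of_mem ψ this
      rw [hinv z hzΩ'] at this
      exact hz this
    · simp [hg_def, hzΩ']
  have hgsupp : Function.support g ⊆ K' := by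
    intro z hz
    by_contra h
    exact hz (hg0 z h)
  -- smoothness of g
  have hgeq : ∀ x ∈ Ω', g =ᶠ[nhds x] (f ∘ φ) := by
    intro x hx
    filter_upwards [hΩ'.mem_nhds hx] with z hz
    exact hgφ z hz
  have hgsm : ContDiff ℝ (⊤ : ℕ∞) g := by
    rw [contDiff_iff_contDiffAt]
    intro x
    by_cases hx : x ∈ Ω'
    · have hφan : AnalyticAt ℂ φ x := hφd.analyticAt (hΩ'.mem_nhds hx)
      have hφcd : ContDiffAt ℝ (⊤ : ℕ∞) φ x := hφan.contDiffAt.restrict_scalars ℝ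
      have hcomp : ContDiffAt ℝ (⊤ : ℕ∞) (f ∘ φ) x := (hfsm.contDiffAt).comp x hφcd
      exact hcomp.congr_of_eventuallyEq (hgeq x hx)
    · have hxK' : x ∉ K' := fun h => hx (hK'Ω' h)
      have : g =ᶠ[nhds x] (fun _ => 0) := by
        filter_upwards [hK'.isClosed.isOpen_compl.mem_nhds hxK'] with z hz
        exact hg0 z hz
      exact contDiffAt_const.congr_of_eventuallyEq this
  have hgtest : IsTestFun Ω' g :=
    ⟨hgsm, HasCompactSupport.intro hK' hg0,
      (closure_minimal hgsupp hK'.isClosed).trans hK'Ω'⟩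
  -- derivative identities
  have hderiv_mul : ∀ x ∈ Ω', deriv ψ (φ x) * deriv φ x = 1 := by
    intro x hx
    have hφdx : DifferentiableAt ℂ φ x := (hφd x hx).differentiableAt (hΩ'.mem_nhds hx)
    have hψdx : DifferentiableAt ℂ ψ (φ x) :=
      (hψ (φ x) (hφmem x hx)).differentiableAt (hΩ.mem_nhds (hφmem x hx))
    have hcomp : deriv (ψ ∘ φ) x = deriv ψ (φ x) * deriv φ x := deriv_comp x hψdx hφdx
    have hid : (ψ ∘ φ) =ᶠ[nhds x] id := by
      filter_upwards [hΩ'.mem_nhds hx] with z hz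
      exact hinv z hz
    rw [hid.deriv_eq, deriv_id] at hcomp
    exact hcomp.symm
  have hnorm1 : ∀ x ∈ Ω', ‖deriv ψ (φ x)‖ * ‖deriv φ x‖ = 1 := by
    intro x hx
    rw [← norm_mul, hderiv_mul x hx, norm_one]
  -- change of variables for the weighted integral
  have hint1 : ∫ w in Ω, |f w| ^ r * ‖deriv ψ w‖ ^ 2 = ∫ x in Ω', |g x| ^ r := by
    rw [hΩeq, cov_holo hΩ' hφd hφinj]
    apply setIntegral_congr_fun hΩ'.measurableSet
    intro x hx
    simp only []
    rw [hgφ x hx]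
    have h1 := hnorm1 x hx
    have h2 : Complex.normSq (deriv φ x) = ‖deriv φ x‖ ^ 2 := by
      rw [← Complex.sq_norm]
    rw [h2]
    calc ‖deriv φ x‖ ^ 2 * (|f (φ x)| ^ r * ‖deriv ψ (φ x)‖ ^ 2)
        = |f (φ x)| ^ r * (‖deriv ψ (φ x)‖ * ‖deriv φ x‖) ^ 2 := by ring
      _ = |f (φ x)| ^ r := by rw [h1]; ring
  -- change of variables for the Dirichlet integral
  have hint2 : ∫ w in Ω, ‖fderiv ℝ f w‖ ^ 2 = ∫ x in Ω', ‖fderiv ℝ g x‖ ^ 2 := by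
    rw [hΩeq, cov_holo hΩ' hφd hφinj]
    apply setIntegral_congr_fun hΩ'.measurableSet
    intro x hx
    simp only []
    have hφdx : DifferentiableAt ℂ φ x := (hφd x hx).differentiableAt (hΩ'.mem_nhds hx)
    have hfderivφ : fderiv ℝ φ x = Mc (deriv φ x) :=
      (hφdx.hasDerivAt.hasFDerivAt.restrictScalars ℝ).fderiv
    have hgfd : fderiv ℝ g x = (fderiv ℝ f (φ x)).comp (Mc (deriv φ x)) := by
      rw [(hgeq x hx).fderiv_eq, fderiv_comp x
        ((hfsm.differentiable (by simp)) (φ x))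
        (hφdx.restrictScalars ℝ), hfderivφ]
    rw [hgfd, norm_comp_Mc _ (hφ' x hx)]
    have h2 : Complex.normSq (deriv φ x) = ‖deriv φ x‖ ^ 2 := by
      rw [← Complex.sq_norm]
    rw [h2]
    ring
  -- conclusion
  obtain ⟨A₀, hA₀, hineq₀⟩ := exists_PS_const Ω' hΩ'bdd r hr
  set S : Set ℝ := {A : ℝ | 0 ≤ A ∧ ∀ u : ℂ → ℝ, IsTestFun Ω' u →
    (∫ z in Ω', |u z| ^ r) ^ (1 / r) ≤ A * (∫ z in Ω', ‖fderiv ℝ u z‖ ^ 2) ^ (1/2 : ℝ)} with hS_def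
  have hS_ne : S.Nonempty := ⟨A₀, hA₀, hineq₀⟩
  set X : ℝ := (∫ w in Ω, |f w| ^ r * ‖deriv ψ w‖ ^ 2) ^ (1 / r) with hX_def
  set Y : ℝ := (∫ w in Ω, ‖fderiv ℝ f w‖ ^ 2) ^ (1/2 : ℝ) with hY_def
  have hY0 : 0 ≤ Y := by
    apply Real.rpow_nonneg
    exact setIntegral_nonneg hΩ.measurableSet fun z _ => by positivity
  have hall : ∀ A ∈ S, X ≤ A * Y := by
    intro A hA
    have := hA.2 g hgtest
    rw [← hint1, ← hint2] at this
    exact this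
  have hbest : bestPSConst Ω' r = sInf S := rfl
  rw [hbest]
  rcases eq_or_lt_of_le hY0 with hY | hY
  · have hX0 : X ≤ 0 := by
      have := hall A₀ ⟨hA₀, hineq₀⟩
      rw [← hY] at this
      simpa using this
    calc X ≤ 0 := hX0
      _ = sInf S * Y := by rw [← hY]; ring
  · have hlb : X / Y ≤ sInf S := by
      apply le_csInf hS_ne
      intro A hA
      rw [div_le_iff₀ hY]
      exact hall A hA
    calc X = X / Y * Y := by field_simp
      _ ≤ sInf S * Y := by gcongr
end
end

section
/- Let Ω be a conformal α-regular domain about a simply connected domain Ω' (for some 2 < α < ∞), with conformal mapping φ : Ω' → Ω, and let h = J_{φ^{-1}} = |(φ^{-1})'|² be the conformal weight on Ω. Then for every function f ∈ L^r(Ω,h) with α/(α−2) ≤ r < ∞, setting s = ((α−2)/α)·r, the inequality ‖f‖_{L^s(Ω)} ≤ (∬_{Ω'} |φ'(u,v)|^α du dv)^{(2/α)·(1/s)} · ‖f | L^r(Ω,h)‖ holds; i.e. the weighted Lebesgue space L^r(Ω,h) embeds into the unweighted space L^s(Ω) with this explicit norm bound. -/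
/-!
Write `h = ‖ψ'‖²` for the conformal weight and use Hölder's inequality with the conjugate
exponents `p = α/(α-2)`, `q = α/2` on the splitting `|f|^s = (|f|^s h^{1/p}) · h^{-1/p}`.
The first factor gives the weighted norm of `f`, the second `∫_Ω h^{-(α-2)/2}`, which the
substitution `w = φ z` turns into `∫_{Ω'} |φ'|^α`: the Jacobian of `φ` is `|φ'|²` and
`|ψ'(φ z)| = |φ'(z)|⁻¹`.
-/

open MeasureTheory Real Set
open scoped ENNReal NNReal

noncomputable section

theorem Complex.det_restrictScalars_smulRight_one (c : ℂ) :
    (((1 : ℂ →L[ℂ] ℂ).smulRight c).restrictScalars ℝ).det = ‖c‖ ^ 2 := by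
  simp [ContinuousLinearMap.det, LinearMap.det_restrictScalars, Algebra.norm_complex_eq,
    Complex.normSq_eq_norm_sq]

section ChangeOfVariables

variable {E : Type*} [NormedAddCommGroup E] [NormedSpace ℝ E] {U : Set ℂ} {φ : ℂ → ℂ}

theorem DifferentiableOn.hasFDerivWithinAt_restrictScalars (hU : IsOpen U)
    (hφ : DifferentiableOn ℂ φ U) {z : ℂ} (hz : z ∈ U) :
    HasFDerivWithinAt φ (((1 : ℂ →L[ℂ] ℂ).smulRight (_root_.deriv φ z)).restrictScalars ℝ)
      U z :=
  ((hφ.differentiableAt (hU.mem_nhds hz)).hasDerivAt.hasFDerivAt.restrictScalars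
    ℝ).hasFDerivWithinAt

theorem integrableOn_image_iff_integrableOn_norm_deriv_sq_smul (hU : IsOpen U)
    (hφ : DifferentiableOn ℂ φ U) (hinj : InjOn φ U) (g : ℂ → E) :
    IntegrableOn g (φ '' U) ↔ IntegrableOn (fun z => ‖deriv φ z‖ ^ 2 • g (φ z)) U := by
  simpa [Complex.det_restrictScalars_smulRight_one] using
    integrableOn_image_iff_integrableOn_abs_det_fderiv_smul volume hU.measurableSet
      (fun z hz => hφ.hasFDerivWithinAt_restrictScalars hU hz) hinj g

theorem integral_image_eq_integral_norm_deriv_sq_smul [CompleteSpace E] (hU : IsOpen U)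
    (hφ : DifferentiableOn ℂ φ U) (hinj : InjOn φ U) (g : ℂ → E) :
    ∫ w in φ '' U, g w = ∫ z in U, ‖deriv φ z‖ ^ 2 • g (φ z) := by
  simpa [Complex.det_restrictScalars_smulRight_one] using
    integral_image_eq_integral_abs_det_fderiv_smul volume hU.measurableSet
      (fun z hz => hφ.hasFDerivWithinAt_restrictScalars hU hz) hinj g

end ChangeOfVariables

section WeightedHolder

variable {X : Type*} [MeasurableSpace X] {μ : Measure X}

theorem memLp_ofReal_of_integrable_rpow {f : X → ℝ} {p : ℝ} (hp : 0 < p)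
    (hf : AEStronglyMeasurable f μ) (hf₀ : 0 ≤ᵐ[μ] f) (hint : Integrable (fun x => f x ^ p) μ) :
    MemLp f (ENNReal.ofReal p) μ := by
  rw [← integrable_norm_rpow_iff hf (by simpa using hp) ENNReal.ofReal_ne_top,
    ENNReal.toReal_ofReal hp.le]
  refine hint.congr ?_
  filter_upwards [hf₀] with x hx
  rw [Real.norm_of_nonneg hx]

theorem integral_le_weighted_integral_rpow_mul {p q : ℝ} (hpq : p.HolderConjugate q)
    {g w : X → ℝ} (hg₀ : 0 ≤ᵐ[μ] g) (hw₀ : ∀ᵐ x ∂μ, 0 < w x)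
    (hg : AEStronglyMeasurable g μ) (hw : AEStronglyMeasurable w μ)
    (hgw : Integrable (fun x => g x ^ p * w x) μ)
    (hw' : Integrable (fun x => w x ^ (-(q / p))) μ) :
    ∫ x, g x ∂μ ≤
      (∫ x, g x ^ p * w x ∂μ) ^ (1 / p) * (∫ x, w x ^ (-(q / p)) ∂μ) ^ (1 / q) := by
  set F : X → ℝ := fun x => g x * w x ^ (1 / p)
  set G : X → ℝ := fun x => w x ^ (-(1 / p))
  have hFG : ∫ x, g x ∂μ = ∫ x, F x * G x ∂μ := by
    refine integral_congr_ae ?_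
    filter_upwards [hw₀] with x hx
    simp only [F, G, Real.rpow_neg hx.le, mul_assoc,
      mul_inv_cancel₀ (Real.rpow_pos_of_pos hx _).ne', mul_one]
  have hFp : (fun x => F x ^ p) =ᵐ[μ] fun x => g x ^ p * w x := by
    filter_upwards [hg₀, hw₀] with x hgx hwx
    rw [Real.mul_rpow hgx (by positivity), ← Real.rpow_mul hwx.le,
      one_div_mul_cancel hpq.ne_zero, Real.rpow_one]
  have hGq : (fun x => G x ^ q) =ᵐ[μ] fun x => w x ^ (-(q / p)) := by
    filter_upwards [hw₀] with x hwx
    rw [← Real.rpow_mul hwx.le]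
    ring_nf
  have hF₀ : 0 ≤ᵐ[μ] F := by
    filter_upwards [hg₀, hw₀] with x hgx hwx
    exact mul_nonneg hgx (Real.rpow_nonneg hwx.le _)
  have hG₀ : 0 ≤ᵐ[μ] G := by
    filter_upwards [hw₀] with x hwx
    exact Real.rpow_nonneg hwx.le _
  have hFm : AEStronglyMeasurable F μ :=
    hg.mul (hw.aemeasurable.pow_const _).aestronglyMeasurable
  have hGm : AEStronglyMeasurable G μ := (hw.aemeasurable.pow_const _).aestronglyMeasurable
  rw [hFG, ← integral_congr_ae hFp, ← integral_congr_ae hGq]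
  exact integral_mul_le_Lp_mul_Lq_of_nonneg hpq hF₀ hG₀
    (memLp_ofReal_of_integrable_rpow hpq.pos hFm hF₀ (hgw.congr hFp.symm))
    (memLp_ofReal_of_integrable_rpow hpq.symm.pos hGm hG₀ (hw'.congr hGq.symm))

end WeightedHolder

namespace ConformalOn

variable {Ω Ω' : Set ℂ} {φ ψ : ℂ → ℂ}

theorem deriv_inverse_apply (hφ : ConformalOn φ Ω' Ω) (hΩ' : IsOpen Ω') (hΩ : IsOpen Ω)
    (hψ : ContinuousOn ψ Ω) (hinv : InvOn ψ φ Ω' Ω) {z : ℂ} (hz : z ∈ Ω') :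
    deriv ψ (φ z) = (deriv φ z)⁻¹ := by
  have hw : φ z ∈ Ω := hφ.2.2.1 ▸ mem_image_of_mem φ hz
  refine (HasDerivAt.of_local_left_inverse (hψ.continuousAt (hΩ.mem_nhds hw)) ?_
    (hφ.2.2.2 z hz) (Filter.eventually_of_mem (hΩ.mem_nhds hw) hinv.2)).deriv
  rw [hinv.1 hz]
  exact (hφ.1.differentiableAt (hΩ'.mem_nhds hz)).hasDerivAt

theorem norm_deriv_inverse_pos (hφ : ConformalOn φ Ω' Ω) (hΩ' : IsOpen Ω') (hΩ : IsOpen Ω)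
    (hψ : ContinuousOn ψ Ω) (hinv : InvOn ψ φ Ω' Ω) {w : ℂ} (hw : w ∈ Ω) :
    0 < ‖deriv ψ w‖ := by
  obtain ⟨z, hz, rfl⟩ := hφ.2.2.1 ▸ hw
  rw [hφ.deriv_inverse_apply hΩ' hΩ hψ hinv hz, norm_inv, inv_pos, norm_pos_iff]
  exact hφ.2.2.2 z hz

theorem norm_deriv_sq_smul_rpow_neg_inverse (hφ : ConformalOn φ Ω' Ω) (hΩ' : IsOpen Ω')
    (hΩ : IsOpen Ω) (hψ : ContinuousOn ψ Ω) (hinv : InvOn ψ φ Ω' Ω) (γ : ℝ) {z : ℂ}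
    (hz : z ∈ Ω') :
    ‖deriv φ z‖ ^ 2 • (‖deriv ψ (φ z)‖ ^ 2) ^ (-γ) = ‖deriv φ z‖ ^ (2 * γ + 2) := by
  have hpos : 0 < ‖deriv φ z‖ := norm_pos_iff.2 (hφ.2.2.2 z hz)
  rw [hφ.deriv_inverse_apply hΩ' hΩ hψ hinv hz, norm_inv, smul_eq_mul, inv_pow,
    Real.inv_rpow (by positivity), ← Real.rpow_neg (by positivity), neg_neg,
    ← Real.rpow_natCast, ← Real.rpow_mul hpos.le, ← Real.rpow_add hpos]
  ring_nf

theorem integrableOn_norm_deriv_inverse_sq_rpow_neg_iff (hφ : ConformalOn φ Ω' Ω)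
    (hΩ' : IsOpen Ω') (hΩ : IsOpen Ω) (hψ : ContinuousOn ψ Ω) (hinv : InvOn ψ φ Ω' Ω) (γ : ℝ) :
    IntegrableOn (fun w => (‖deriv ψ w‖ ^ 2) ^ (-γ)) Ω ↔
      IntegrableOn (fun z => ‖deriv φ z‖ ^ (2 * γ + 2)) Ω' := by
  rw [← hφ.2.2.1, integrableOn_image_iff_integrableOn_norm_deriv_sq_smul hΩ' hφ.1 hφ.2.1]
  exact integrableOn_congr_fun
    (fun z hz => hφ.norm_deriv_sq_smul_rpow_neg_inverse hΩ' hΩ hψ hinv γ hz) hΩ'.measurableSet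

theorem integral_norm_deriv_inverse_sq_rpow_neg (hφ : ConformalOn φ Ω' Ω) (hΩ' : IsOpen Ω')
    (hΩ : IsOpen Ω) (hψ : ContinuousOn ψ Ω) (hinv : InvOn ψ φ Ω' Ω) (γ : ℝ) :
    ∫ w in Ω, (‖deriv ψ w‖ ^ 2) ^ (-γ) = ∫ z in Ω', ‖deriv φ z‖ ^ (2 * γ + 2) := by
  rw [← hφ.2.2.1, integral_image_eq_integral_norm_deriv_sq_smul hΩ' hφ.1 hφ.2.1]
  exact setIntegral_congr_fun hΩ'.measurableSet
    (fun z hz => hφ.norm_deriv_sq_smul_rpow_neg_inverse hΩ' hΩ hψ hinv γ hz)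

end ConformalOn

theorem weighted_lebesgue_embedding_general
    (Ω Ω' : Set ℂ) (φ ψ : ℂ → ℂ) (α : ℝ) (hα : 2 < α)
    (hΩ : IsOpen Ω) (hΩ' : IsOpen Ω')
    (hφ : ConformalOn φ Ω' Ω)
    -- conformal `α`-regularity: `∬_{Ω'} |φ'|^α < ∞`
    (hreg : IntegrableOn (fun z => ‖deriv φ z‖ ^ α) Ω')
    -- `ψ = φ⁻¹ : Ω → Ω'` is the (holomorphic) inverse of `φ`
    (hψ : DifferentiableOn ℂ ψ Ω)
    (hinv : ∀ z ∈ Ω', ψ (φ z) = z) (hinv' : ∀ w ∈ Ω, φ (ψ w) = w)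
    (r s : ℝ) (hr : α / (α - 2) ≤ r) (hs : s = (α - 2) / α * r)
    -- `f ∈ L^r(Ω, h)` with `h = |(φ⁻¹)'|²`
    (f : ℂ → ℝ) (hfm : AEStronglyMeasurable f (volume.restrict Ω))
    (hfL : IntegrableOn (fun w => |f w| ^ r * ‖deriv ψ w‖ ^ 2) Ω) :
    (∫ w in Ω, |f w| ^ s) ^ (1 / s) ≤
      (∫ z in Ω', ‖deriv φ z‖ ^ α) ^ (2 / α * (1 / s)) *
        (∫ w in Ω, |f w| ^ r * ‖deriv ψ w‖ ^ 2) ^ (1 / r) := by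
  have hα₂ : 0 < α - 2 := by linarith
  have hr₀ : 0 < r := (div_pos (by linarith) hα₂).trans_le hr
  have hs₀ : 0 < s := hs ▸ mul_pos (div_pos hα₂ (by linarith)) hr₀
  set p := α / (α - 2)
  set q := α / 2
  have hpq : p.HolderConjugate q := Real.holderConjugate_iff.2
    ⟨by rw [lt_div_iff₀ hα₂]; linarith, by simp only [p, q]; field_simp; ring⟩
  have hsp : s * p = r := by simp only [hs, p]; field_simp
  have hfp : ∀ w, (|f w| ^ s) ^ p = |f w| ^ r := fun w => by
    rw [← Real.rpow_mul (abs_nonneg _), hsp]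
  have hγ : 2 * (q / p) + 2 = α := by simp only [p, q]; field_simp; ring
  have hψc := hψ.continuousOn
  have hψinv : InvOn ψ φ Ω' Ω := ⟨hinv, hinv'⟩
  have holder := integral_le_weighted_integral_rpow_mul hpq (g := fun w => |f w| ^ s)
    (Filter.Eventually.of_forall fun w => by positivity)
    ((ae_restrict_mem hΩ.measurableSet).mono fun w hw =>
      pow_pos (hφ.norm_deriv_inverse_pos hΩ' hΩ hψc hψinv hw) 2)
    (hfm.norm.aemeasurable.pow_const s).aestronglyMeasurable
    ((measurable_deriv ψ).norm.pow_const 2).aestronglyMeasurable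
    (by simp only [hfp]; exact hfL)
    ((hφ.integrableOn_norm_deriv_inverse_sq_rpow_neg_iff hΩ' hΩ hψc hψinv _).2 (hγ ▸ hreg))
  simp only [hfp, hφ.integral_norm_deriv_inverse_sq_rpow_neg hΩ' hΩ hψc hψinv, hγ] at holder
  calc (∫ w in Ω, |f w| ^ s) ^ (1 / s)
      ≤ ((∫ w in Ω, |f w| ^ r * ‖deriv ψ w‖ ^ 2) ^ (1 / p) *
          (∫ z in Ω', ‖deriv φ z‖ ^ α) ^ (1 / q)) ^ (1 / s) :=
        Real.rpow_le_rpow (integral_nonneg fun w => by positivity) holder (by positivity)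
    _ = _ := by
        rw [Real.mul_rpow (by positivity) (by positivity),
          ← Real.rpow_mul (integral_nonneg fun w => by positivity),
          ← Real.rpow_mul (integral_nonneg fun w => by positivity), mul_comm, one_div_div,
          ← hsp, one_div_mul_one_div, mul_comm s]

/-- For a conformal `α`-regular domain `Ω` about `Ω'`, the weighted space
`L^r(Ω,h)` with conformal weight `h = |(φ⁻¹)'|²` embeds into `L^s(Ω)`,
`s = r·(α−2)/α`, with explicit norm bound. -/
theorem weighted_lebesgue_embedding
    (Ω Ω' : Set ℂ) (φ ψ : ℂ → ℂ) (α : ℝ) (hα : 2 < α)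
    (hΩ : IsOpen Ω) (hΩ' : IsOpen Ω')
    (hΩc : IsConnected Ω) (hΩ'c : IsConnected Ω')
    (hΩsc : SimplyConnectedSpace Ω) (hΩ'sc : SimplyConnectedSpace Ω')
    (hφ : ConformalOn φ Ω' Ω)
    -- conformal `α`-regularity: `∬_{Ω'} |φ'|^α < ∞`
    (hreg : IntegrableOn (fun z => ‖deriv φ z‖ ^ α) Ω')
    -- `ψ = φ⁻¹ : Ω → Ω'` is the (holomorphic) inverse of `φ`
    (hψ : DifferentiableOn ℂ ψ Ω)
    (hinv : ∀ z ∈ Ω', ψ (φ z) = z) (hinv' : ∀ w ∈ Ω, φ (ψ w) = w)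
    (r s : ℝ) (hr : α / (α - 2) ≤ r) (hs : s = (α - 2) / α * r)
    -- `f ∈ L^r(Ω, h)` with `h = |(φ⁻¹)'|²`
    (f : ℂ → ℝ) (hfm : AEStronglyMeasurable f (volume.restrict Ω))
    (hfL : IntegrableOn (fun w => |f w| ^ r * ‖deriv ψ w‖ ^ 2) Ω) :
    (∫ w in Ω, |f w| ^ s) ^ (1 / s) ≤
      (∫ z in Ω', ‖deriv φ z‖ ^ α) ^ (2 / α * (1 / s)) *
        (∫ w in Ω, |f w| ^ r * ‖deriv ψ w‖ ^ 2) ^ (1 / r) :=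
  weighted_lebesgue_embedding_general Ω Ω' φ ψ α hα hΩ hΩ' hφ hreg hψ hinv hinv' r s hr hs f hfm hfL
end
end

section
/- Let Ω be a conformal ∞-regular domain about a bounded simply connected domain Ω', i.e. the conformal mapping φ : Ω' → Ω satisfies ‖φ' | L^∞(Ω')‖ = ess sup_{Ω'} |φ'| < ∞. Then for every function f ∈ W^{1,2}_0(Ω), the Poincaré–Sobolev inequality ‖f‖_{L²(Ω)} ≤ A_{2,2}(Ω) ‖∇f‖_{L²(Ω)} holds with constant satisfying A_{2,2}(Ω) ≤ A_{2,2}(Ω') · ‖φ' | L^∞(Ω')‖. -/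
open MeasureTheory Real Set
open scoped ENNReal NNReal

noncomputable section

namespace PoincareAux

/-- multiplication by `c`, as a real-linear continuous map on `ℂ`. -/
def Lc (c : ℂ) : ℂ →L[ℝ] ℂ := ((1 : ℂ →L[ℂ] ℂ).smulRight c).restrictScalars ℝ

lemma Lc_apply (c x : ℂ) : Lc c x = x * c := by
  simp [Lc, smul_eq_mul]

lemma norm_Lc (c : ℂ) : ‖Lc c‖ = ‖c‖ := by
  rw [Lc, ContinuousLinearMap.norm_restrictScalars,
    ContinuousLinearMap.norm_smulRight_apply, norm_one, one_mul]

lemma det_Lc (c : ℂ) : (Lc c).det = Complex.normSq c := by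
  have h : ((Lc c) : ℂ →ₗ[ℝ] ℂ) = Algebra.lmul ℝ ℂ c := by
    apply LinearMap.ext; intro x
    simp [Lc, smul_eq_mul, mul_comm]
  rw [ContinuousLinearMap.det, h]
  rw [← Algebra.norm_complex_apply, Algebra.norm_apply]

lemma norm_comp_Lc (L : ℂ →L[ℝ] ℝ) {c : ℂ} (hc : c ≠ 0) :
    ‖L.comp (Lc c)‖ = ‖L‖ * ‖c‖ := by
  have hc' : (0:ℝ) < ‖c‖ := norm_pos_iff.mpr hc
  refine le_antisymm ((L.opNorm_comp_le _).trans_eq (by rw [norm_Lc])) ?_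
  have h1 : L = (L.comp (Lc c)).comp (Lc c⁻¹) := by
    ext x
    simp [Lc_apply, mul_assoc, inv_mul_cancel₀ hc]
  have h2 := (L.comp (Lc c)).opNorm_comp_le (Lc c⁻¹)
  rw [← h1, norm_Lc, norm_inv] at h2
  calc ‖L‖ * ‖c‖ ≤ ‖L.comp (Lc c)‖ * ‖c‖⁻¹ * ‖c‖ := by gcongr
    _ = ‖L.comp (Lc c)‖ := by rw [mul_assoc, inv_mul_cancel₀ hc'.ne', mul_one]

lemma abs_rpow_two (x : ℝ) : |x| ^ (2:ℝ) = x ^ 2 := by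
  rw [show (2:ℝ) = ((2:ℕ):ℝ) by norm_num, Real.rpow_natCast, sq_abs]


lemma hasFDerivAt_real {φ : ℂ → ℂ} {z : ℂ} (hd : DifferentiableAt ℂ φ z) :
    HasFDerivAt φ (Lc (deriv φ z)) z :=
  (hd.hasDerivAt.hasFDerivAt).restrictScalars ℝ

lemma fderiv_real {φ : ℂ → ℂ} {z : ℂ} (hd : DifferentiableAt ℂ φ z) :
    fderiv ℝ φ z = Lc (deriv φ z) :=
  (hasFDerivAt_real hd).fderiv

lemma continuousOn_invFunOn {φ : ℂ → ℂ} {Ω' : Set ℂ} (hΩ' : IsOpen Ω')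
    (hdiff : DifferentiableOn ℂ φ Ω') (hinj : Set.InjOn φ Ω')
    (hder : ∀ z ∈ Ω', deriv φ z ≠ 0) :
    ContinuousOn (Function.invFunOn φ Ω') (φ '' Ω') := by
  set ψ := Function.invFunOn φ Ω' with hψ
  have hψmem : ∀ w ∈ φ '' Ω', ψ w ∈ Ω' ∧ φ (ψ w) = w := by
    rintro w ⟨z, hz, rfl⟩
    exact ⟨Function.invFunOn_mem ⟨z, hz, rfl⟩, Function.invFunOn_eq ⟨z, hz, rfl⟩⟩
  rintro w₀ ⟨z₀, hz₀, rfl⟩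
  have han : AnalyticAt ℂ φ z₀ := (hdiff.analyticAt (hΩ'.mem_nhds hz₀))
  obtain ⟨p, hp⟩ := han
  have hst : HasStrictDerivAt φ (deriv φ z₀) z₀ := by
    have := hp.hasStrictDerivAt
    rwa [← hp.deriv] at this
  have hne : deriv φ z₀ ≠ 0 := hder z₀ hz₀
  have he := hst.hasStrictFDerivAt_equiv hne
  set e := he.toOpenPartialHomeomorph φ with hedef
  have hecoe : (e : ℂ → ℂ) = φ := he.toOpenPartialHomeomorph_coe
  have hz₀e : z₀ ∈ e.source := he.mem_toOpenPartialHomeomorph_source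
  set t := e.source ∩ Ω' with ht
  have hto : IsOpen t := e.open_source.inter hΩ'
  have hVo : IsOpen (e '' t) := e.isOpen_image_of_subset_source hto inter_subset_left
  have hwV : φ z₀ ∈ e '' t := ⟨z₀, ⟨hz₀e, hz₀⟩, by rw [hecoe]⟩
  have hagree : ∀ w ∈ (e '' t), w ∈ φ '' Ω' → ψ w = e.symm w := by
    rintro w ⟨z, hz, rfl⟩ hw
    have h1 : e.symm (e z) = z := e.left_inv hz.1
    have h2 : (e : ℂ → ℂ) z = φ z := by rw [hecoe]
    rw [h2] at h1 ⊢
    rw [h1]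
    have h3 := hψmem (φ z) ⟨z, hz.2, rfl⟩
    exact hinj h3.1 hz.2 h3.2
  have hsymm : ContinuousAt e.symm (φ z₀) := by
    apply e.continuousAt_symm
    have : (e : ℂ → ℂ) z₀ = φ z₀ := by rw [hecoe]
    rw [← this]
    exact e.map_source hz₀e
  refine (hsymm.continuousWithinAt).congr_of_eventuallyEq ?_ ?_
  · filter_upwards [mem_nhdsWithin_of_mem_nhds (hVo.mem_nhds hwV), self_mem_nhdsWithin]
      with w hw1 hw2 using hagree w hw1 hw2
  · exact hagree _ hwV ⟨z₀, hz₀, rfl⟩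

lemma isCompact_inter_preimage {φ : ℂ → ℂ} {Ω' : Set ℂ} (hΩ' : IsOpen Ω')
    (hdiff : DifferentiableOn ℂ φ Ω') (hinj : Set.InjOn φ Ω')
    (hder : ∀ z ∈ Ω', deriv φ z ≠ 0) {K : Set ℂ} (hK : IsCompact K)
    (hKΩ : K ⊆ φ '' Ω') : IsCompact (Ω' ∩ φ ⁻¹' K) := by
  set ψ := Function.invFunOn φ Ω' with hψ
  have hψmem : ∀ w ∈ φ '' Ω', ψ w ∈ Ω' ∧ φ (ψ w) = w := by
    rintro w ⟨z, hz, rfl⟩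
    exact ⟨Function.invFunOn_mem ⟨z, hz, rfl⟩, Function.invFunOn_eq ⟨z, hz, rfl⟩⟩
  have hψφ : ∀ z ∈ Ω', ψ (φ z) = z := fun z hz => hinj.leftInvOn_invFunOn hz
  have hset : Ω' ∩ φ ⁻¹' K = ψ '' K := by
    ext z; constructor
    · rintro ⟨hz, hzK⟩
      exact ⟨φ z, hzK, hψφ z hz⟩
    · rintro ⟨w, hw, rfl⟩
      obtain ⟨h1, h2⟩ := hψmem w (hKΩ hw)
      exact ⟨h1, by simpa [h2] using hw⟩
  rw [hset]
  exact hK.image_of_continuousOn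
    ((continuousOn_invFunOn hΩ' hdiff hinj hder).mono hKΩ)


lemma isTestFun_comp {Ω Ω' : Set ℂ} {φ : ℂ → ℂ} (hΩ' : IsOpen Ω')
    (hdiff : DifferentiableOn ℂ φ Ω') (hinj : Set.InjOn φ Ω')
    (him : φ '' Ω' = Ω) (hder : ∀ z ∈ Ω', deriv φ z ≠ 0)
    {u : ℂ → ℝ} (hu : IsTestFun Ω u) :
    IsTestFun Ω' (Ω'.indicator (u ∘ φ)) := by
  set K := tsupport u with hKdef
  have hK : IsCompact K := hu.2.1
  have hKΩ : K ⊆ φ '' Ω' := him ▸ hu.2.2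
  have hK' : IsCompact (Ω' ∩ φ ⁻¹' K) :=
    isCompact_inter_preimage hΩ' hdiff hinj hder hK hKΩ
  set K' := Ω' ∩ φ ⁻¹' K with hK'def
  set g := Ω'.indicator (u ∘ φ) with hg
  have hgK' : ∀ x ∉ K', g x = 0 := by
    intro x hx
    by_cases hxΩ : x ∈ Ω'
    · have hxK : φ x ∉ K := fun h => hx ⟨hxΩ, h⟩
      rw [hg, Set.indicator_of_mem hxΩ]
      exact image_eq_zero_of_notMem_tsupport (f := u) hxK
    · rw [hg, Set.indicator_of_notMem hxΩ]
  have hsupp : tsupport g ⊆ K' := by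
    apply closure_minimal _ hK'.isClosed
    intro x hx
    by_contra hxK
    exact hx (hgK' x hxK)
  refine ⟨?_, ?_, hsupp.trans inter_subset_left⟩
  · rw [contDiff_iff_contDiffAt]
    intro z
    by_cases hz : z ∈ Ω'
    · have hφz : ContDiffAt ℝ (⊤ : ℕ∞) φ z :=
        ((hdiff.analyticAt (hΩ'.mem_nhds hz)).contDiffAt).restrict_scalars ℝ
      have huz : ContDiffAt ℝ (⊤ : ℕ∞) u (φ z) := hu.1.contDiffAt
      have hcomp : ContDiffAt ℝ (⊤ : ℕ∞) (u ∘ φ) z := huz.comp z hφz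
      apply hcomp.congr_of_eventuallyEq
      filter_upwards [hΩ'.mem_nhds hz] with w hw
      rw [hg, Set.indicator_of_mem hw]
    · have hzK' : z ∉ K' := fun h => hz h.1
      have : ContDiffAt ℝ (⊤ : ℕ∞) (fun _ : ℂ => (0:ℝ)) z := contDiffAt_const
      apply this.congr_of_eventuallyEq
      filter_upwards [hK'.isClosed.isOpen_compl.mem_nhds hzK'] with w hw
      exact hgK' w hw
  · exact HasCompactSupport.intro hK' hgK'


lemma setIntegral_sq_rpow_eq {V : Type*} [NormedAddCommGroup V] {D : Set ℂ} {v : ℂ → V}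
    (hv : Continuous v) (hcs : HasCompactSupport v) (hsupp : tsupport v ⊆ D) :
    (∫ z in D, ‖v z‖ ^ 2) ^ (1/2:ℝ) = (eLpNorm v 2 volume).toReal := by
  have hmem : MemLp v 2 volume := hv.memLp_of_hasCompactSupport hcs
  rw [hmem.eLpNorm_eq_integral_rpow_norm two_ne_zero ENNReal.ofNat_ne_top,
    ENNReal.toReal_ofReal (by positivity)]
  have h1 : ∫ z in D, ‖v z‖ ^ 2 = ∫ z, ‖v z‖ ^ 2 := by
    apply setIntegral_eq_integral_of_forall_compl_eq_zero
    intro x hx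
    have : v x = 0 := image_eq_zero_of_notMem_tsupport (fun h => hx (hsupp h))
    simp [this]
  rw [h1]
  simp only [ENNReal.toReal_ofNat]
  have h2 : ∀ a : ℂ, ‖v a‖ ^ (2:ℝ) = ‖v a‖ ^ (2:ℕ) := fun a => by
    rw [show (2:ℝ) = ((2:ℕ):ℝ) by norm_num, Real.rpow_natCast]
  simp only [h2]
  rw [one_div]

lemma exists_poincare_const {D : Set ℂ} (hD : Bornology.IsBounded D) :
    ∃ A : ℝ, 0 ≤ A ∧ ∀ u : ℂ → ℝ, IsTestFun D u →
      (∫ z in D, |u z| ^ (2:ℝ)) ^ (1/2:ℝ) ≤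
        A * (∫ z in D, ‖fderiv ℝ u z‖ ^ 2) ^ (1/2:ℝ) := by
  set C := eLpNormLESNormFDerivOfLeConst ℝ volume D 1 2 with hC
  refine ⟨(C:ℝ) * ((volume D).toReal ^ (1/2:ℝ)), by positivity, ?_⟩
  intro u hu
  have hu1 : ContDiff ℝ 1 u := hu.1.of_le (by exact_mod_cast le_top)
  have hsupp : u.support ⊆ D := (subset_tsupport u).trans hu.2.2
  have hfin : (1 : ℝ≥0) < Module.finrank ℝ ℂ := by
    rw [Complex.finrank_real_complex]; norm_num
  have hpq : (1 : ℝ≥0)⁻¹ - (Module.finrank ℝ ℂ : ℝ)⁻¹ ≤ ((2:ℝ≥0) : ℝ)⁻¹ := by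
    rw [Complex.finrank_real_complex]; norm_num
  have key := eLpNorm_le_eLpNorm_fderiv_of_le (F := ℝ) volume hu1 hsupp
      (p := 1) (q := 2) le_rfl hfin hpq hD
  have hfdc : Continuous (fderiv ℝ u) := hu.1.continuous_fderiv (by simp)
  have hfdcs : HasCompactSupport (fderiv ℝ u) := hu.2.1.fderiv ℝ
  have hfdsupp : tsupport (fderiv ℝ u) ⊆ D :=
    (closure_minimal (support_fderiv_subset ℝ (f := u)) (isClosed_tsupport u)).trans hu.2.2
  have step2 : eLpNorm (fderiv ℝ u) 1 volume
      = eLpNorm (fderiv ℝ u) 1 (volume.restrict D) :=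
    (eLpNorm_restrict_eq_of_support_subset (ε := ℂ →L[ℝ] ℝ) (f := fderiv ℝ u)
      ((subset_tsupport (fderiv ℝ u)).trans hfdsupp)).symm
  have step3 : eLpNorm (fderiv ℝ u) 1 (volume.restrict D)
      ≤ eLpNorm (fderiv ℝ u) 2 (volume.restrict D) * (volume D) ^ (1/2 : ℝ) := by
    have := eLpNorm_le_eLpNorm_mul_rpow_measure_univ (μ := volume.restrict D)
      (p := 1) (q := 2) (f := fderiv ℝ u) one_le_two hfdc.aestronglyMeasurable
    have e : (1:ℝ) / (1:ℝ≥0∞).toReal - 1 / (2:ℝ≥0∞).toReal = 1/2 := by norm_num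
    rw [Measure.restrict_apply_univ, e] at this
    exact this
  have step4 : eLpNorm (fderiv ℝ u) 2 (volume.restrict D)
      = eLpNorm (fderiv ℝ u) 2 volume :=
    eLpNorm_restrict_eq_of_support_subset (ε := ℂ →L[ℝ] ℝ) (f := fderiv ℝ u)
      ((subset_tsupport (fderiv ℝ u)).trans hfdsupp)
  have chain : eLpNorm u 2 volume
      ≤ (C : ℝ≥0∞) * ((volume D) ^ (1/2:ℝ) * eLpNorm (fderiv ℝ u) 2 volume) := by
    calc eLpNorm u 2 volume ≤ C * eLpNorm (fderiv ℝ u) 1 volume := key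
      _ ≤ C * (eLpNorm (fderiv ℝ u) 2 volume * (volume D) ^ (1/2:ℝ)) := by
          rw [step2]; gcongr; rw [← step4]; exact step3
      _ = (C : ℝ≥0∞) * ((volume D) ^ (1/2:ℝ) * eLpNorm (fderiv ℝ u) 2 volume) := by
          ring
  have hvol : volume D ≠ ⊤ := hD.measure_lt_top.ne
  have heLp : eLpNorm (fderiv ℝ u) 2 volume ≠ ⊤ :=
    (hfdc.memLp_of_hasCompactSupport (μ := volume) hfdcs).eLpNorm_ne_top
  have hrhs : (C : ℝ≥0∞) * ((volume D) ^ (1/2:ℝ) * eLpNorm (fderiv ℝ u) 2 volume) ≠ ⊤ := by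
    apply ENNReal.mul_ne_top ENNReal.coe_ne_top
    exact ENNReal.mul_ne_top (ENNReal.rpow_ne_top_of_nonneg (by norm_num) hvol) heLp
  have hreal := ENNReal.toReal_mono hrhs chain
  have lhs_eq : (∫ z in D, |u z| ^ (2:ℝ)) ^ (1/2:ℝ) = (eLpNorm u 2 volume).toReal := by
    rw [← setIntegral_sq_rpow_eq hu.1.continuous hu.2.1 hu.2.2]
    congr 1
    apply integral_congr_ae; filter_upwards with z
    rw [Real.norm_eq_abs, abs_rpow_two, sq_abs]
  have rhs_eq : (∫ z in D, ‖fderiv ℝ u z‖ ^ 2) ^ (1/2:ℝ)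
      = (eLpNorm (fderiv ℝ u) 2 volume).toReal :=
    setIntegral_sq_rpow_eq hfdc hfdcs hfdsupp
  rw [lhs_eq, rhs_eq]
  calc (eLpNorm u 2 volume).toReal
      ≤ ((C : ℝ≥0∞) * ((volume D) ^ (1/2:ℝ) * eLpNorm (fderiv ℝ u) 2 volume)).toReal := hreal
    _ = (C:ℝ) * ((volume D).toReal ^ (1/2:ℝ)) * (eLpNorm (fderiv ℝ u) 2 volume).toReal := by
        rw [ENNReal.toReal_mul, ENNReal.toReal_mul, ENNReal.coe_toReal, ← ENNReal.toReal_rpow]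
        ring


lemma transfer {Ω Ω' : Set ℂ} {φ : ℂ → ℂ} (hΩ' : IsOpen Ω')
    (hφd : DifferentiableOn ℂ φ Ω') (hinj : Set.InjOn φ Ω') (him : φ '' Ω' = Ω)
    (hder : ∀ z ∈ Ω', deriv φ z ≠ 0)
    (hreg : essSup (fun z => (‖deriv φ z‖₊ : ℝ≥0∞)) (volume.restrict Ω') ≠ ⊤)
    {u : ℂ → ℝ} (hu : IsTestFun Ω u) {A : ℝ}
    (hA : ∀ f : ℂ → ℝ, IsTestFun Ω' f →
      (∫ z in Ω', |f z| ^ (2:ℝ)) ^ (1/(2:ℝ)) ≤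
        A * (∫ z in Ω', ‖fderiv ℝ f z‖ ^ 2) ^ (1/2:ℝ)) :
    (∫ w in Ω, |u w| ^ (2 : ℝ)) ^ (1/2 : ℝ) ≤
      A * ((essSup (fun z => (‖deriv φ z‖₊ : ℝ≥0∞)) (volume.restrict Ω')).toReal *
        (∫ w in Ω, ‖fderiv ℝ u w‖ ^ 2) ^ (1/2 : ℝ)) := by
  set M := (essSup (fun z => (‖deriv φ z‖₊ : ℝ≥0∞)) (volume.restrict Ω')).toReal with hMdef
  have hM0 : 0 ≤ M := ENNReal.toReal_nonneg
  set g := Ω'.indicator (u ∘ φ) with hgdef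
  have hg : IsTestFun Ω' g := isTestFun_comp hΩ' hφd hinj him hder hu
  have hΩ'm : MeasurableSet Ω' := hΩ'.measurableSet
  have hdz : ∀ z ∈ Ω', DifferentiableAt ℂ φ z :=
    fun z hz => hφd.differentiableAt (hΩ'.mem_nhds hz)
  have hfd : ∀ z ∈ Ω', HasFDerivWithinAt φ (Lc (deriv φ z)) Ω' z :=
    fun z hz => (hasFDerivAt_real (hdz z hz)).hasFDerivWithinAt
  have cov : ∀ F : ℂ → ℝ, ∫ w in Ω, F w
      = ∫ z in Ω', Complex.normSq (deriv φ z) * F (φ z) := by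
    intro F
    rw [← him, integral_image_eq_integral_abs_det_fderiv_smul volume hΩ'm hfd hinj F]
    apply setIntegral_congr_fun hΩ'm
    intro z _
    beta_reduce
    rw [det_Lc, smul_eq_mul, abs_of_nonneg (Complex.normSq_nonneg _)]
  have chain : ∀ z ∈ Ω', fderiv ℝ g z = (fderiv ℝ u (φ z)).comp (Lc (deriv φ z)) := by
    intro z hz
    have hev : g =ᶠ[nhds z] (u ∘ φ) := by
      filter_upwards [hΩ'.mem_nhds hz] with w hw
      exact Set.indicator_of_mem hw _
    rw [hev.fderiv_eq,
      fderiv_comp z (hu.1.differentiable (by simp) _) ((hdz z hz).restrictScalars ℝ),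
      fderiv_real (hdz z hz)]
  have hnormg : ∀ z ∈ Ω', ‖fderiv ℝ g z‖ = ‖fderiv ℝ u (φ z)‖ * ‖deriv φ z‖ := by
    intro z hz
    rw [chain z hz, norm_comp_Lc _ (hder z hz)]
  have hnsq : ∀ c : ℂ, Complex.normSq c = ‖c‖ ^ 2 := fun c => by
    rw [Complex.normSq_eq_norm_sq]
  have claim2 : ∫ w in Ω, ‖fderiv ℝ u w‖ ^ 2 = ∫ z in Ω', ‖fderiv ℝ g z‖ ^ 2 := by
    rw [cov (fun w => ‖fderiv ℝ u w‖ ^ 2)]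
    apply setIntegral_congr_fun hΩ'm
    intro z hz
    beta_reduce
    rw [hnormg z hz, hnsq]
    ring
  have claim1 : ∫ w in Ω, |u w| ^ (2:ℝ)
      = ∫ z in Ω', Complex.normSq (deriv φ z) * (g z) ^ 2 := by
    rw [cov (fun w => |u w| ^ (2:ℝ))]
    apply setIntegral_congr_fun hΩ'm
    intro z hz
    beta_reduce
    rw [abs_rpow_two, hgdef, Set.indicator_of_mem hz, Function.comp_apply]
  -- the essential supremum bound
  have hMle : ∀ᵐ z ∂(volume.restrict Ω'), ‖deriv φ z‖ ≤ M := by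
    filter_upwards [ENNReal.ae_le_essSup (fun z => (‖deriv φ z‖₊ : ℝ≥0∞))] with z hz
    have := ENNReal.toReal_mono hreg hz
    simpa using this
  have hgc : Continuous g := hg.1.continuous
  have hg2int : Integrable (fun z => (g z) ^ 2) (volume.restrict Ω') := by
    apply Integrable.restrict
    exact ((show Continuous (fun z => (g z) ^ 2) from hgc.pow 2).integrable_of_hasCompactSupport
      (HasCompactSupport.comp_left (g := fun x : ℝ => x ^ 2) hg.2.1 (by norm_num)))
  have h2int : Integrable (fun z => M ^ 2 * (g z) ^ 2) (volume.restrict Ω') :=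
    hg2int.const_mul _
  have h1sm : AEStronglyMeasurable (fun z => Complex.normSq (deriv φ z) * (g z) ^ 2)
      (volume.restrict Ω') := by
    apply AEStronglyMeasurable.mul
    · exact (Complex.continuous_normSq.comp_continuousOn
        (((hφd.analyticOnNhd hΩ').deriv).continuousOn)).aestronglyMeasurable hΩ'm
    · exact (hgc.pow 2).aestronglyMeasurable
  have hbound : ∀ᵐ z ∂(volume.restrict Ω'),
      ‖Complex.normSq (deriv φ z) * (g z) ^ 2‖ ≤ M ^ 2 * (g z) ^ 2 := by
    filter_upwards [hMle] with z hz
    rw [Real.norm_eq_abs, abs_of_nonneg (mul_nonneg (Complex.normSq_nonneg _) (sq_nonneg _))]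
    have h1 : ‖deriv φ z‖ ^ 2 ≤ M ^ 2 := by
      apply pow_le_pow_left₀ (norm_nonneg _) hz
    rw [hnsq]
    exact mul_le_mul_of_nonneg_right h1 (sq_nonneg _)
  have h1int : Integrable (fun z => Complex.normSq (deriv φ z) * (g z) ^ 2)
      (volume.restrict Ω') := h2int.mono' h1sm hbound
  have claim3 : ∫ z in Ω', Complex.normSq (deriv φ z) * (g z) ^ 2
      ≤ M ^ 2 * ∫ z in Ω', (g z) ^ 2 := by
    have hle : (fun z => Complex.normSq (deriv φ z) * (g z) ^ 2)
        ≤ᵐ[volume.restrict Ω'] fun z => M ^ 2 * (g z) ^ 2 := by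
      filter_upwards [hbound] with z hz
      exact le_trans (le_abs_self _) (by rwa [← Real.norm_eq_abs])
    calc ∫ z in Ω', Complex.normSq (deriv φ z) * (g z) ^ 2
        ≤ ∫ z in Ω', M ^ 2 * (g z) ^ 2 := integral_mono_ae h1int h2int hle
      _ = M ^ 2 * ∫ z in Ω', (g z) ^ 2 := by
          rw [← smul_eq_mul, ← integral_smul]
          simp [smul_eq_mul]
  -- nonnegativity
  have hY0 : 0 ≤ ∫ z in Ω', (g z) ^ 2 := integral_nonneg (fun z => sq_nonneg _)
  have hE0 : 0 ≤ ∫ w in Ω, ‖fderiv ℝ u w‖ ^ 2 := integral_nonneg (fun z => by positivity)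
  have hX0 : 0 ≤ ∫ w in Ω, |u w| ^ (2:ℝ) := integral_nonneg (fun z => by positivity)
  -- apply the Poincaré inequality on Ω' to g
  have hgY : ∫ z in Ω', |g z| ^ (2:ℝ) = ∫ z in Ω', (g z) ^ 2 := by
    apply integral_congr_ae; filter_upwards with z; rw [abs_rpow_two]
  have poin := hA g hg
  rw [hgY, ← claim2] at poin
  -- assemble
  calc (∫ w in Ω, |u w| ^ (2 : ℝ)) ^ (1/2 : ℝ)
      ≤ (M ^ 2 * ∫ z in Ω', (g z) ^ 2) ^ (1/2 : ℝ) := by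
        apply Real.rpow_le_rpow hX0 _ (by norm_num)
        rw [claim1]; exact claim3
    _ = M * (∫ z in Ω', (g z) ^ 2) ^ (1/2 : ℝ) := by
        rw [Real.mul_rpow (sq_nonneg M) hY0, ← Real.rpow_natCast M 2,
          ← Real.rpow_mul hM0]
        norm_num
    _ ≤ M * (A * (∫ w in Ω, ‖fderiv ℝ u w‖ ^ 2) ^ (1/2 : ℝ)) := by
        apply mul_le_mul_of_nonneg_left _ hM0
        exact poin
    _ = A * (M * (∫ w in Ω, ‖fderiv ℝ u w‖ ^ 2) ^ (1/2 : ℝ)) := by ring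

end PoincareAux


/-- Poincaré inequality in a conformal `∞`-regular domain, with constant
`A_{2,2}(Ω) ≤ A_{2,2}(Ω') · ‖φ' | L^∞(Ω')‖`. -/
theorem poincare_infty_regular
    (Ω Ω' : Set ℂ) (φ : ℂ → ℂ)
    (hΩ : IsOpen Ω) (hΩ' : IsOpen Ω')
    (hΩc : IsConnected Ω) (hΩ'c : IsConnected Ω')
    (hΩsc : SimplyConnectedSpace Ω) (hΩ'sc : SimplyConnectedSpace Ω')
    (hΩ'bdd : Bornology.IsBounded Ω')
    (hφ : ConformalOn φ Ω' Ω)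
    -- conformal `∞`-regularity: `ess sup_{Ω'} |φ'| < ∞`
    (hreg : essSup (fun z => (‖deriv φ z‖₊ : ℝ≥0∞)) (volume.restrict Ω') ≠ ⊤) :
    (∀ f : ℂ → ℝ, IsTestFun Ω f →
      (∫ w in Ω, |f w| ^ (2 : ℝ)) ^ (1/2 : ℝ) ≤
        bestPSConst Ω' 2 * linfNorm Ω' (deriv φ) *
          (∫ w in Ω, ‖fderiv ℝ f w‖ ^ 2) ^ (1/2 : ℝ)) ∧
    bestPSConst Ω 2 ≤ bestPSConst Ω' 2 * linfNorm Ω' (deriv φ) := by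
  obtain ⟨hφd, hinj, him, hder⟩ := hφ
  set M := linfNorm Ω' (deriv φ) with hM
  have hM0 : 0 ≤ M := ENNReal.toReal_nonneg
  set S : Set ℝ := {A : ℝ | 0 ≤ A ∧ ∀ f : ℂ → ℝ, IsTestFun Ω' f →
    (∫ z in Ω', |f z| ^ (2:ℝ)) ^ (1 / (2:ℝ)) ≤
      A * (∫ z in Ω', ‖fderiv ℝ f z‖ ^ 2) ^ (1/2 : ℝ)} with hS
  have hbest : bestPSConst Ω' 2 = sInf S := rfl
  obtain ⟨A₀, hA₀0, hA₀⟩ := PoincareAux.exists_poincare_const hΩ'bdd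
  have hA₀S : A₀ ∈ S := ⟨hA₀0, hA₀⟩
  have hSne : S.Nonempty := ⟨A₀, hA₀S⟩
  have hInf0 : 0 ≤ sInf S := le_csInf hSne (fun A hA => hA.1)
  have main : ∀ f : ℂ → ℝ, IsTestFun Ω f →
      (∫ w in Ω, |f w| ^ (2:ℝ)) ^ (1/2:ℝ) ≤
        sInf S * M * (∫ w in Ω, ‖fderiv ℝ f w‖ ^ 2) ^ (1/2:ℝ) := by
    intro f hf
    have hE0 : 0 ≤ (∫ w in Ω, ‖fderiv ℝ f w‖ ^ 2) ^ (1/2:ℝ) :=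
      Real.rpow_nonneg (integral_nonneg fun _ => by positivity) _
    set c : ℝ := M * (∫ w in Ω, ‖fderiv ℝ f w‖ ^ 2) ^ (1/2:ℝ) with hc
    have hc0 : 0 ≤ c := mul_nonneg hM0 hE0
    have key : ∀ A ∈ S, (∫ w in Ω, |f w| ^ (2:ℝ)) ^ (1/2:ℝ) ≤ A * c := by
      intro A hA
      exact PoincareAux.transfer hΩ' hφd hinj him hder hreg hf hA.2
    by_cases hc' : c = 0
    · rw [mul_assoc]
      show _ ≤ sInf S * c
      rw [hc', mul_zero]
      have t0 := key A₀ hA₀S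
      rw [hc', mul_zero] at t0
      exact t0
    · have hcpos : 0 < c := lt_of_le_of_ne hc0 (Ne.symm hc')
      have h1 : (∫ w in Ω, |f w| ^ (2:ℝ)) ^ (1/2:ℝ) / c ≤ sInf S :=
        le_csInf hSne (fun A hA => (div_le_iff₀ hcpos).mpr (key A hA))
      have h2 : (∫ w in Ω, |f w| ^ (2:ℝ)) ^ (1/2:ℝ)
          = (∫ w in Ω, |f w| ^ (2:ℝ)) ^ (1/2:ℝ) / c * c := by
        field_simp
      rw [mul_assoc]
      show _ ≤ sInf S * c
      rw [h2]
      exact mul_le_mul_of_nonneg_right h1 hc0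
  constructor
  · exact main
  · have hSΩ : bestPSConst Ω 2 = sInf {A : ℝ | 0 ≤ A ∧ ∀ f : ℂ → ℝ, IsTestFun Ω f →
        (∫ z in Ω, |f z| ^ (2:ℝ)) ^ (1 / (2:ℝ)) ≤
          A * (∫ z in Ω, ‖fderiv ℝ f z‖ ^ 2) ^ (1/2 : ℝ)} := rfl
    rw [hSΩ, hbest]
    apply csInf_le ⟨0, fun A hA => hA.1⟩
    exact ⟨mul_nonneg hInf0 hM0, main⟩
end
end

section
/- (Theorem A) Let Ω be a conformal ∞-regular domain about a bounded simply connected domain Ω', i.e. the Riemann conformal mapping φ : Ω' → Ω satisfies ‖φ' | L^∞(Ω')‖ = ess sup_{Ω'} |φ'| < ∞. Then the first Dirichlet eigenvalues of the Laplace operator satisfy λ₁(Ω) ≥ λ₁(Ω') / ‖φ' | L^∞(Ω')‖². -/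
open MeasureTheory Real Set
open scoped ENNReal NNReal

noncomputable section

/-! ### Auxiliary material -/

/-- Multiplication by `c` as a real-linear continuous map on `ℂ`. -/
def cmulCLM (c : ℂ) : ℂ →L[ℝ] ℂ :=
  ((1 : ℂ →L[ℂ] ℂ).smulRight c).restrictScalars ℝ

@[simp] lemma cmulCLM_apply (c z : ℂ) : cmulCLM c z = z * c := by
  simp [cmulCLM, smul_eq_mul]

lemma det_cmulCLM (c : ℂ) : (cmulCLM c).det = Complex.normSq c := by
  have h : ((cmulCLM c) : ℂ →ₗ[ℝ] ℂ) = Algebra.lmul ℝ ℂ c := by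
    ext z
    simp [cmulCLM, smul_eq_mul, mul_comm]
  rw [ContinuousLinearMap.det, h, ← Algebra.norm_apply, Algebra.norm_complex_apply]

lemma norm_comp_cmulCLM (L : ℂ →L[ℝ] ℝ) (c : ℂ) :
    ‖L.comp (cmulCLM c)‖ = ‖L‖ * ‖c‖ := by
  rcases eq_or_ne c 0 with rfl | hc
  · have : L.comp (cmulCLM 0) = 0 := by ext z; simp
    simp [this]
  · apply le_antisymm
    · apply ContinuousLinearMap.opNorm_le_bound _ (by positivity)
      intro z
      calc ‖L (z * c)‖ ≤ ‖L‖ * ‖z * c‖ := L.le_opNorm _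
        _ = ‖L‖ * ‖c‖ * ‖z‖ := by rw [norm_mul]; ring
    · have h2 : ‖L‖ ≤ ‖L.comp (cmulCLM c)‖ * ‖c‖⁻¹ := by
        apply ContinuousLinearMap.opNorm_le_bound _ (by positivity)
        intro z
        have : L z = (L.comp (cmulCLM c)) (z * c⁻¹) := by
          simp [mul_assoc, inv_mul_cancel₀ hc]
        rw [this]
        calc ‖(L.comp (cmulCLM c)) (z * c⁻¹)‖
            ≤ ‖L.comp (cmulCLM c)‖ * ‖z * c⁻¹‖ := (L.comp (cmulCLM c)).le_opNorm _
          _ = ‖L.comp (cmulCLM c)‖ * ‖c‖⁻¹ * ‖z‖ := by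
              rw [norm_mul, norm_inv]; ring
      have hc' : (0:ℝ) < ‖c‖ := norm_pos_iff.mpr hc
      calc ‖L‖ * ‖c‖ ≤ (‖L.comp (cmulCLM c)‖ * ‖c‖⁻¹) * ‖c‖ :=
            mul_le_mul_of_nonneg_right h2 hc'.le
        _ = ‖L.comp (cmulCLM c)‖ := by
            rw [mul_assoc, inv_mul_cancel₀ hc'.ne', mul_one]

variable {Ω Ω' : Set ℂ} {φ : ℂ → ℂ}

lemma hasFDerivAt_cmul (hΩ' : IsOpen Ω') (hd : DifferentiableOn ℂ φ Ω')
    {z : ℂ} (hz : z ∈ Ω') : HasFDerivAt φ (cmulCLM (deriv φ z)) z := by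
  have hda : DifferentiableAt ℂ φ z := hd.differentiableAt (hΩ'.mem_nhds hz)
  exact hda.hasDerivAt.hasFDerivAt.restrictScalars ℝ

/-- Change of variables for the conformal map. -/
lemma integral_image_conformal (hΩ' : IsOpen Ω') (hd : DifferentiableOn ℂ φ Ω')
    (hinj : Set.InjOn φ Ω') (g : ℂ → ℝ) :
    ∫ w in φ '' Ω', g w = ∫ z in Ω', Complex.normSq (deriv φ z) • g (φ z) := by
  rw [integral_image_eq_integral_abs_det_fderiv_smul volume hΩ'.measurableSet
    (fun z hz => (hasFDerivAt_cmul hΩ' hd hz).hasFDerivWithinAt) hinj g]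
  refine setIntegral_congr_fun hΩ'.measurableSet (fun z _ => ?_)
  rw [det_cmulCLM, abs_of_nonneg (Complex.normSq_nonneg _)]

lemma isLocalHomeomorphOn_conformal (hΩ' : IsOpen Ω') (hd : DifferentiableOn ℂ φ Ω')
    (hder : ∀ z ∈ Ω', deriv φ z ≠ 0) : IsLocalHomeomorphOn φ Ω' := by
  apply IsLocalHomeomorphOn.mk
  intro z hz
  have hcd : ContDiffAt ℂ 1 φ z :=
    (hd.contDiffOn hΩ' (n := 1)).contDiffAt (hΩ'.mem_nhds hz)
  set e' : ℂ ≃L[ℂ] ℂ := ContinuousLinearEquiv.unitsEquivAut ℂ (Units.mk0 _ (hder z hz)) with he'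
  have hfd : HasFDerivAt φ (e' : ℂ →L[ℂ] ℂ) z := by
    have h1 : HasFDerivAt φ ((1 : ℂ →L[ℂ] ℂ).smulRight (deriv φ z)) z :=
      (hd.differentiableAt (hΩ'.mem_nhds hz)).hasDerivAt.hasFDerivAt
    exact h1
  have hstrict : HasStrictFDerivAt φ (e' : ℂ →L[ℂ] ℂ) z :=
    hcd.hasStrictFDerivAt' hfd one_ne_zero
  exact ⟨hstrict.toOpenPartialHomeomorph φ, hstrict.mem_toOpenPartialHomeomorph_source,
    fun y _ => (congrFun hstrict.toOpenPartialHomeomorph_coe y).symm⟩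

lemma isCompact_conformal_preimage (hΩ' : IsOpen Ω') (hd : DifferentiableOn ℂ φ Ω')
    (hinj : Set.InjOn φ Ω') (hder : ∀ z ∈ Ω', deriv φ z ≠ 0)
    {T : Set ℂ} (hT : IsCompact T) (hTsub : T ⊆ φ '' Ω') :
    IsCompact (Ω' ∩ φ ⁻¹' T) := by
  rcases eq_empty_or_nonempty Ω' with rfl | hne
  · simp
  have : Nonempty ↥Ω' := hne.to_subtype
  set g : ↥Ω' → ℂ := fun x => φ x.1 with hg
  have hlocg : IsLocalHomeomorph g := by
    rw [isLocalHomeomorph_iff_isLocalHomeomorphOn_univ]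
    exact IsLocalHomeomorphOn.comp (isLocalHomeomorphOn_conformal hΩ' hd hder)
      (hΩ'.isOpenEmbedding_subtypeVal.isLocalHomeomorph.isLocalHomeomorphOn)
      (fun x _ => x.2)
  have hginj : Function.Injective g := fun a b hab => Subtype.ext (hinj a.2 b.2 hab)
  have hemb : Topology.IsOpenEmbedding g := hlocg.isOpenEmbedding_of_injective hginj
  set e := hemb.toOpenPartialHomeomorph g with he
  have hrange : Set.range g = φ '' Ω' := by
    ext w; constructor
    · rintro ⟨x, rfl⟩; exact ⟨x.1, x.2, rfl⟩
    · rintro ⟨z, hz, rfl⟩; exact ⟨⟨z, hz⟩, rfl⟩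
  have hTt : T ⊆ e.target := by
    rw [Topology.IsOpenEmbedding.toOpenPartialHomeomorph_target]
    rw [hrange]; exact hTsub
  have hK' : IsCompact (e.symm '' T) :=
    hT.image_of_continuousOn (e.symm.continuousOn.mono hTt)
  have hKeq : Ω' ∩ φ ⁻¹' T = Subtype.val '' (e.symm '' T) := by
    ext z; constructor
    · rintro ⟨hz, hzT⟩
      refine ⟨e.symm (φ z), ⟨φ z, hzT, ?_⟩, ?_⟩
      · rfl
      · have : e.symm (g ⟨z, hz⟩) = ⟨z, hz⟩ :=
          Topology.IsOpenEmbedding.toOpenPartialHomeomorph_left_inv g hemb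
        simpa [hg] using congrArg Subtype.val this
    · rintro ⟨x, ⟨w, hwT, rfl⟩, rfl⟩
      refine ⟨(e.symm w).2, ?_⟩
      have : g (e.symm w) = w :=
        Topology.IsOpenEmbedding.toOpenPartialHomeomorph_right_inv g hemb
          (by rw [hrange]; exact hTsub hwT)
      show φ (↑(e.symm w)) ∈ T
      rw [show φ (↑(e.symm w)) = w from this]
      exact hwT
  rw [hKeq]
  exact hK'.image continuous_subtype_val

lemma pulled_back_test (hΩ' : IsOpen Ω') (hd : DifferentiableOn ℂ φ Ω')
    (hinj : Set.InjOn φ Ω') (hder : ∀ z ∈ Ω', deriv φ z ≠ 0)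
    {f : ℂ → ℝ} (hf : IsTestFun (φ '' Ω') f) :
    IsTestFun Ω' (Ω'.indicator (f ∘ φ)) := by
  obtain ⟨hsm, hcs, hts⟩ := hf
  set u := Ω'.indicator (f ∘ φ) with hu
  set K := Ω' ∩ φ ⁻¹' (tsupport f) with hKdef
  have hK : IsCompact K := isCompact_conformal_preimage hΩ' hd hinj hder hcs hts
  have hKsub : K ⊆ Ω' := inter_subset_left
  have hsupp : Function.support u ⊆ K := by
    intro z hz
    by_cases hzΩ : z ∈ Ω'
    · refine ⟨hzΩ, ?_⟩
      have : u z = f (φ z) := indicator_of_mem hzΩ _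
      have hz' : f (φ z) ≠ 0 := by rwa [Function.mem_support, this] at hz
      exact subset_tsupport f hz'
    · exact absurd (indicator_of_notMem hzΩ _) hz
  have htsupp : tsupport u ⊆ K := closure_minimal hsupp hK.isClosed
  refine ⟨?_, ?_, htsupp.trans hKsub⟩
  · rw [contDiff_iff_contDiffAt]
    intro z
    by_cases hz : z ∈ Ω'
    · have hev : u =ᶠ[nhds z] (f ∘ φ) :=
        Filter.eventuallyEq_of_mem (hΩ'.mem_nhds hz) (fun w hw => indicator_of_mem hw _)
      have hφcd : ContDiffAt ℝ (⊤ : ℕ∞) φ z :=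
        (((hd.contDiffOn hΩ' (n := (⊤ : ℕ∞))).contDiffAt
          (hΩ'.mem_nhds hz))).restrict_scalars ℝ
      exact (hsm.contDiffAt.comp z hφcd).congr_of_eventuallyEq hev
    · have hzK : z ∉ K := fun h => hz (hKsub h)
      have hev : u =ᶠ[nhds z] (fun _ => (0:ℝ)) := by
        refine Filter.eventuallyEq_of_mem (hK.isClosed.isOpen_compl.mem_nhds hzK) ?_
        intro w hw
        by_cases hwΩ : w ∈ Ω'
        · have hwK : φ w ∉ tsupport f := fun hmem => hw ⟨hwΩ, hmem⟩
          have : f (φ w) = 0 := image_eq_zero_of_notMem_tsupport hwK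
          simpa [hu, indicator_of_mem hwΩ] using this
        · simp [hu, indicator_of_notMem hwΩ]
      exact contDiffAt_const.congr_of_eventuallyEq hev
  · exact hK.of_isClosed_subset (isClosed_tsupport u) htsupp

lemma fderiv_pulled_back (hΩ' : IsOpen Ω') (hd : DifferentiableOn ℂ φ Ω')
    {f : ℂ → ℝ} (hsm : ContDiff ℝ (⊤ : ℕ∞) f) {z : ℂ} (hz : z ∈ Ω') :
    fderiv ℝ (Ω'.indicator (f ∘ φ)) z
      = (fderiv ℝ f (φ z)).comp (cmulCLM (deriv φ z)) := by
  have hev : Ω'.indicator (f ∘ φ) =ᶠ[nhds z] (f ∘ φ) :=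
    Filter.eventuallyEq_of_mem (hΩ'.mem_nhds hz) (fun w hw => indicator_of_mem hw _)
  rw [hev.fderiv_eq]
  exact (((hsm.differentiable (by simp)) (φ z)).hasFDerivAt.comp z
    (hasFDerivAt_cmul hΩ' hd hz)).fderiv

lemma test_sq_integrable {f : ℂ → ℝ} (hf : IsTestFun Ω f) :
    Integrable (fun z => f z ^ 2) volume := by
  apply Continuous.integrable_of_hasCompactSupport (hf.1.continuous.pow 2)
  have := hf.2.1.comp_left (g := fun t : ℝ => t ^ 2) (by simp)
  exact this

lemma setIntegral_test_eq {Ω : Set ℂ} {f : ℂ → ℝ} (g : ℝ → ℝ) (hg : g 0 = 0)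
    (hts : tsupport f ⊆ Ω) : ∫ z in Ω, g (f z) = ∫ z, g (f z) := by
  apply setIntegral_eq_integral_of_ae_compl_eq_zero
  apply Filter.Eventually.of_forall
  intro z hz
  have : f z = 0 := image_eq_zero_of_notMem_tsupport (fun h => hz (hts h))
  rw [this, hg]

lemma test_sq_pos {Ω : Set ℂ} {f : ℂ → ℝ} (hf : IsTestFun Ω f) (hne : f ≠ 0) :
    0 < ∫ z in Ω, f z ^ 2 := by
  rw [setIntegral_test_eq (fun t => t ^ 2) (by simp) hf.2.2]
  refine (integral_pos_iff_support_of_nonneg (fun z => sq_nonneg _)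
    (test_sq_integrable hf)).mpr ?_
  have hsupp : Function.support (fun z => f z ^ 2) = Function.support f := by
    ext z; simp [Function.mem_support, pow_eq_zero_iff (by norm_num : (2:ℕ) ≠ 0)]
  rw [hsupp]
  exact (hf.1.continuous.isOpen_support).measure_pos volume
    (Function.support_nonempty_iff.mpr hne)

lemma exists_test (hΩ : IsOpen Ω) (hne : Ω.Nonempty) :
    ∃ f : ℂ → ℝ, IsTestFun Ω f ∧ f ≠ 0 := by
  obtain ⟨z₀, hz₀⟩ := hne
  obtain ⟨ε, εpos, hball⟩ := Metric.isOpen_iff.mp hΩ z₀ hz₀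
  set b : ContDiffBump z₀ := ⟨ε/4, ε/2, by positivity, by linarith⟩ with hb
  refine ⟨⇑b, ⟨b.contDiff, b.hasCompactSupport, ?_⟩, ?_⟩
  · rw [b.tsupport_eq]
    exact (Metric.closedBall_subset_ball (by simp [hb]; linarith)).trans hball
  · intro h
    have h1 : b z₀ = 1 := b.one_of_mem_closedBall
      (Metric.mem_closedBall_self (le_of_lt (by positivity)))
    rw [h] at h1
    simp at h1

lemma firstEigenvalue_nonneg (D : Set ℂ) : 0 ≤ firstEigenvalue D := by
  apply Real.sInf_nonneg
  rintro r ⟨f, -, rfl⟩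
  exact div_nonneg (integral_nonneg fun z => sq_nonneg _)
    (integral_nonneg fun z => sq_nonneg _)

lemma bddBelow_eigenSet (D : Set ℂ) :
    BddBelow ((fun f => (∫ z in D, ‖fderiv ℝ f z‖ ^ 2) / (∫ z in D, (f z) ^ 2)) ''
      {f : ℂ → ℝ | IsTestFun D f ∧ f ≠ 0}) := by
  refine ⟨0, ?_⟩
  rintro r ⟨f, -, rfl⟩
  exact div_nonneg (integral_nonneg fun z => sq_nonneg _)
    (integral_nonneg fun z => sq_nonneg _)

/-- Theorem A: lower estimate for `λ₁(Ω)` in a conformal `∞`-regular domain. -/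
theorem first_eigenvalue_infty_regular
    (Ω Ω' : Set ℂ) (φ : ℂ → ℂ)
    (hΩ : IsOpen Ω) (hΩ' : IsOpen Ω')
    (hΩc : IsConnected Ω) (hΩ'c : IsConnected Ω')
    (hΩsc : SimplyConnectedSpace Ω) (hΩ'sc : SimplyConnectedSpace Ω')
    (hΩ'bdd : Bornology.IsBounded Ω')
    (hφ : ConformalOn φ Ω' Ω)
    -- conformal `∞`-regularity: `ess sup_{Ω'} |φ'| < ∞`
    (hreg : essSup (fun z => (‖deriv φ z‖₊ : ℝ≥0∞)) (volume.restrict Ω') ≠ ⊤) :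
    firstEigenvalue Ω ≥ firstEigenvalue Ω' / (linfNorm Ω' (deriv φ)) ^ 2 := by
  obtain ⟨hd, hinj, himg, hder⟩ := hφ
  rw [ge_iff_le]
  set M := linfNorm Ω' (deriv φ) with hM
  have hM0 : 0 ≤ M := ENNReal.toReal_nonneg
  -- trivial case: `Ω'` empty
  rcases eq_empty_or_nonempty Ω' with rfl | hne
  · have hset : {f : ℂ → ℝ | IsTestFun (∅ : Set ℂ) f ∧ f ≠ 0} = ∅ := by
      rw [eq_empty_iff_forall_notMem]
      rintro f ⟨hf, hfne⟩
      apply hfne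
      funext z
      by_contra h
      exact hf.2.2 (subset_tsupport f h)
    rw [firstEigenvalue, hset, Set.image_empty, Real.sInf_empty, zero_div]
    exact firstEigenvalue_nonneg Ω
  -- trivial case: `M = 0`
  rcases eq_or_lt_of_le hM0 with hMz | hMpos
  · rw [← hMz, zero_pow (by norm_num : (2:ℕ) ≠ 0), div_zero]
    exact firstEigenvalue_nonneg Ω
  -- main case
  have hΩeq : Ω = φ '' Ω' := himg.symm
  have hΩne : Ω.Nonempty := by
    rw [hΩeq]; exact hne.image φ
  -- the a.e. derivative bound
  have haeM : ∀ᵐ z ∂(volume.restrict Ω'), ‖deriv φ z‖ ≤ M := by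
    filter_upwards [ENNReal.ae_le_essSup (fun z => (‖deriv φ z‖₊ : ℝ≥0∞))] with z hz
    have := ENNReal.toReal_mono hreg hz
    simpa [hM, linfNorm] using this
  refine le_csInf ?_ ?_
  · obtain ⟨f, hft, hfne⟩ := exists_test hΩ hΩne
    exact ⟨_, ⟨f, ⟨hft, hfne⟩, rfl⟩⟩
  rintro r ⟨f, ⟨hft, hfne⟩, rfl⟩
  have hftΩ : IsTestFun (φ '' Ω') f := hΩeq ▸ hft
  set u := Ω'.indicator (f ∘ φ) with hu
  have hut : IsTestFun Ω' u := pulled_back_test hΩ' hd hinj hder hftΩ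
  have hune : u ≠ 0 := by
    obtain ⟨w, hw⟩ := Function.ne_iff.mp hfne
    have hwmem : w ∈ φ '' Ω' := by
      rw [← hΩeq]
      exact hft.2.2 (subset_tsupport f hw)
    obtain ⟨z, hz, rfl⟩ := hwmem
    intro h0
    have h1 : u z = f (φ z) := indicator_of_mem hz _
    rw [h0] at h1
    exact hw h1.symm
  -- change of variables for the denominator
  have hB : ∫ z in Ω, f z ^ 2
      = ∫ z in Ω', Complex.normSq (deriv φ z) • (f (φ z)) ^ 2 := by
    rw [hΩeq]
    exact integral_image_conformal hΩ' hd hinj (fun w => f w ^ 2)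
  -- change of variables for the numerator
  have hA : ∫ z in Ω, ‖fderiv ℝ f z‖ ^ 2 = ∫ z in Ω', ‖fderiv ℝ u z‖ ^ 2 := by
    rw [hΩeq, integral_image_conformal hΩ' hd hinj (fun w => ‖fderiv ℝ f w‖ ^ 2)]
    refine setIntegral_congr_fun hΩ'.measurableSet (fun z hz => ?_)
    rw [hu, fderiv_pulled_back hΩ' hd hft.1 hz, norm_comp_cmulCLM]
    rw [smul_eq_mul, Complex.normSq_eq_norm_sq]
    rw [mul_pow]
    ring
  -- denominator estimate
  have hBle : ∫ z in Ω, f z ^ 2 ≤ M ^ 2 * ∫ z in Ω', u z ^ 2 := by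
    rw [hB, ← integral_const_mul]
    apply integral_mono_of_nonneg
    · exact Filter.Eventually.of_forall
        (fun z => smul_nonneg (Complex.normSq_nonneg _) (sq_nonneg _))
    · exact ((test_sq_integrable hut).restrict.const_mul _)
    · filter_upwards [haeM, ae_restrict_mem hΩ'.measurableSet] with z h1 h2
      have huz : u z = f (φ z) := indicator_of_mem h2 _
      rw [smul_eq_mul, ← huz]
      have hns : Complex.normSq (deriv φ z) ≤ M ^ 2 := by
        rw [Complex.normSq_eq_norm_sq]
        exact pow_le_pow_left₀ (norm_nonneg _) h1 2
      exact mul_le_mul_of_nonneg_right hns (sq_nonneg _)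
  -- Rayleigh quotient bound for `u`
  have hBu : 0 < ∫ z in Ω', u z ^ 2 := test_sq_pos hut hune
  have hBf : 0 < ∫ z in Ω, f z ^ 2 := test_sq_pos hft hfne
  have hlam0 : 0 ≤ firstEigenvalue Ω' := firstEigenvalue_nonneg Ω'
  have hlamu : firstEigenvalue Ω'
      ≤ (∫ z in Ω', ‖fderiv ℝ u z‖ ^ 2) / (∫ z in Ω', u z ^ 2) :=
    csInf_le (bddBelow_eigenSet Ω') ⟨u, ⟨hut, hune⟩, rfl⟩
  have hlamuB : firstEigenvalue Ω' * ∫ z in Ω', u z ^ 2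
      ≤ ∫ z in Ω', ‖fderiv ℝ u z‖ ^ 2 := by
    rw [← div_mul_cancel₀ (∫ z in Ω', ‖fderiv ℝ u z‖ ^ 2) hBu.ne']
    exact mul_le_mul_of_nonneg_right hlamu hBu.le
  -- conclusion
  rw [div_le_div_iff₀ (by positivity) hBf]
  calc firstEigenvalue Ω' * ∫ z in Ω, f z ^ 2
      ≤ firstEigenvalue Ω' * (M ^ 2 * ∫ z in Ω', u z ^ 2) :=
        mul_le_mul_of_nonneg_left hBle hlam0
    _ = (firstEigenvalue Ω' * ∫ z in Ω', u z ^ 2) * M ^ 2 := by ring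
    _ ≤ (∫ z in Ω', ‖fderiv ℝ u z‖ ^ 2) * M ^ 2 :=
        mul_le_mul_of_nonneg_right hlamuB (sq_nonneg M)
    _ = (∫ z in Ω, ‖fderiv ℝ f z‖ ^ 2) * M ^ 2 := by rw [hA]
end
end

section
/- Let Ω be a conformal ∞-regular domain about a bounded simply connected domain Ω', with Riemann conformal mapping φ : Ω' → Ω, and assume Ω ⊂ Ω'. Then the variation of the first Dirichlet eigenvalue satisfies λ₁(Ω) − λ₁(Ω') ≥ ((1 − ‖φ' | L^∞(Ω')‖²) / ‖φ' | L^∞(Ω')‖²) · λ₁(Ω'). -/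
set_option maxHeartbeats 1000000


open MeasureTheory Real Set
open scoped ENNReal NNReal

noncomputable section

/-- The absolute value of the real determinant of (multiplication by) a complex number. -/
lemma det_aux (a : ℂ) :
    |((((1 : ℂ →L[ℂ] ℂ).smulRight a).restrictScalars ℝ : ℂ →L[ℝ] ℂ)).det| = ‖a‖ ^ 2 := by
  have : ((((1 : ℂ →L[ℂ] ℂ).smulRight a).restrictScalars ℝ : ℂ →L[ℝ] ℂ)).det
      = LinearMap.det ((((1 : ℂ →L[ℂ] ℂ).smulRight a).restrictScalars ℝ : ℂ →L[ℝ] ℂ) :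
        ℂ →ₗ[ℝ] ℂ) := rfl
  rw [this, ← LinearMap.det_toMatrix Complex.basisOneI, Matrix.det_fin_two]
  simp [LinearMap.toMatrix_apply, Complex.coe_basisOneI_repr, Complex.coe_basisOneI,
    ← Complex.normSq_eq_norm_sq, Complex.normSq_apply, smul_eq_mul]
  ring_nf
  positivity

/-- Norm of the composition of a real-linear functional with (multiplication by) a
nonzero complex number. -/
lemma norm_comp_aux (L : ℂ →L[ℝ] ℝ) (a : ℂ) (ha : a ≠ 0) :
    ‖L.comp (((1 : ℂ →L[ℂ] ℂ).smulRight a).restrictScalars ℝ)‖ = ‖L‖ * ‖a‖ := by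
  set M : ℂ →L[ℝ] ℂ := ((1 : ℂ →L[ℂ] ℂ).smulRight a).restrictScalars ℝ with hM
  set Minv : ℂ →L[ℝ] ℂ := ((1 : ℂ →L[ℂ] ℂ).smulRight a⁻¹).restrictScalars ℝ with hMinv
  have hMnorm : ‖M‖ = ‖a‖ := by
    rw [hM, ContinuousLinearMap.norm_restrictScalars, ContinuousLinearMap.norm_smulRight_apply]
    simp
  have hMinvnorm : ‖Minv‖ = ‖a⁻¹‖ := by
    rw [hMinv, ContinuousLinearMap.norm_restrictScalars, ContinuousLinearMap.norm_smulRight_apply]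
    simp
  have hcomp : (L.comp M).comp Minv = L := by
    ext z
    simp [hM, hMinv, smul_eq_mul]
    rw [inv_mul_cancel_right₀ ha]
  apply le_antisymm
  · calc ‖L.comp M‖ ≤ ‖L‖ * ‖M‖ := ContinuousLinearMap.opNorm_comp_le _ _
    _ = ‖L‖ * ‖a‖ := by rw [hMnorm]
  · have h2 : ‖L‖ ≤ ‖L.comp M‖ * ‖a‖⁻¹ := by
      calc ‖L‖ = ‖(L.comp M).comp Minv‖ := by rw [hcomp]
      _ ≤ ‖L.comp M‖ * ‖Minv‖ := ContinuousLinearMap.opNorm_comp_le _ _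
      _ = ‖L.comp M‖ * ‖a‖⁻¹ := by rw [hMinvnorm, norm_inv]
    have hapos : 0 < ‖a‖ := norm_pos_iff.mpr ha
    calc ‖L‖ * ‖a‖ ≤ (‖L.comp M‖ * ‖a‖⁻¹) * ‖a‖ :=
          mul_le_mul_of_nonneg_right h2 (le_of_lt hapos)
    _ = ‖L.comp M‖ := by
          rw [mul_assoc, inv_mul_cancel₀ (ne_of_gt hapos), mul_one]

/-- Any nonempty open set carries a nonzero test function. -/
lemma exists_testFun {Ω : Set ℂ} (hΩ : IsOpen Ω) (hne : Ω.Nonempty) :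
    ∃ f : ℂ → ℝ, IsTestFun Ω f ∧ f ≠ 0 := by
  obtain ⟨z₀, hz₀⟩ := hne
  obtain ⟨R, hR, hball⟩ := Metric.isOpen_iff.1 hΩ z₀ hz₀
  set b : ContDiffBump z₀ := ⟨R/4, R/2, by positivity, by linarith⟩ with hb
  refine ⟨b, ⟨b.contDiff, b.hasCompactSupport, ?_⟩, ?_⟩
  · rw [b.tsupport_eq]
    exact subset_trans (Metric.closedBall_subset_ball (by simp [hb]; linarith)) hball
  · intro h
    have h1 : b z₀ = 1 := b.one_of_mem_closedBall (Metric.mem_closedBall_self (by positivity))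
    rw [show (⇑b : ℂ → ℝ) z₀ = (0 : ℂ → ℝ) z₀ from congrFun h z₀] at h1
    simpa using h1

/-- Variation of the first Dirichlet eigenvalue under a conformal deformation
`φ : Ω' → Ω ⊂ Ω'`. -/
theorem first_eigenvalue_variation
    (Ω Ω' : Set ℂ) (φ : ℂ → ℂ)
    (hΩ : IsOpen Ω) (hΩ' : IsOpen Ω')
    (hΩc : IsConnected Ω) (hΩ'c : IsConnected Ω')
    (hΩsc : SimplyConnectedSpace Ω) (hΩ'sc : SimplyConnectedSpace Ω')
    (hΩ'bdd : Bornology.IsBounded Ω')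
    (hsub : Ω ⊆ Ω')
    (hφ : ConformalOn φ Ω' Ω)
    -- conformal `∞`-regularity: `ess sup_{Ω'} |φ'| < ∞`
    (hreg : essSup (fun z => (‖deriv φ z‖₊ : ℝ≥0∞)) (volume.restrict Ω') ≠ ⊤) :
    firstEigenvalue Ω - firstEigenvalue Ω' ≥
      (1 - (linfNorm Ω' (deriv φ)) ^ 2) / (linfNorm Ω' (deriv φ)) ^ 2 *
        firstEigenvalue Ω' := by
  classical
  obtain ⟨hφd, hφinj, hφim, hφ'⟩ := hφ
  set K := linfNorm Ω' (deriv φ) with hKdef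
  -- the a.e. bound by the essential supremum
  have haeK : ∀ᵐ z ∂(volume.restrict Ω'), ‖deriv φ z‖ ≤ K := by
    filter_upwards [ENNReal.ae_le_essSup (fun z => (‖deriv φ z‖₊ : ℝ≥0∞))] with z hz
    have := ENNReal.toReal_mono hreg hz
    simpa [hKdef, linfNorm] using this
  -- positivity of `K`
  have hKpos : 0 < K := by
    have h1 : 0 < volume Ω' := hΩ'.measure_pos volume hΩ'c.nonempty
    have hpt : ∃ z ∈ Ω', ‖deriv φ z‖ ≤ K := by
      by_contra hcon
      push_neg at hcon
      have hF : ∀ᵐ z ∂(volume.restrict Ω'), False := by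
        filter_upwards [haeK, ae_restrict_mem hΩ'.measurableSet] with z hz1 hz2
        exact absurd hz1 (not_le.mpr (hcon z hz2))
      rw [ae_iff] at hF
      have h2 : volume.restrict Ω' Set.univ = 0 := by simpa using hF
      rw [Measure.restrict_apply_univ] at h2
      exact absurd h2 h1.ne'
    obtain ⟨z₁, hz₁, hle⟩ := hpt
    exact lt_of_lt_of_le (norm_pos_iff.mpr (hφ' z₁ hz₁)) hle
  have hK2pos : 0 < K ^ 2 := by positivity
  -- lower bound 0 for the Rayleigh quotients
  have hbdd : ∀ D : Set ℂ, ∀ r ∈ ((fun f => (∫ z in D, ‖fderiv ℝ f z‖ ^ 2) /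
      (∫ z in D, (f z) ^ 2)) '' {f : ℂ → ℝ | IsTestFun D f ∧ f ≠ 0}), 0 ≤ r := by
    rintro D r ⟨f, -, rfl⟩
    exact div_nonneg (integral_nonneg fun z => sq_nonneg _)
      (integral_nonneg fun z => sq_nonneg _)
  have hbddBelow : BddBelow ((fun f => (∫ z in Ω', ‖fderiv ℝ f z‖ ^ 2) /
      (∫ z in Ω', (f z) ^ 2)) '' {f : ℂ → ℝ | IsTestFun Ω' f ∧ f ≠ 0}) :=
    ⟨0, fun r hr => hbdd Ω' r hr⟩
  have hlamnn : 0 ≤ firstEigenvalue Ω' := by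
    rw [firstEigenvalue]
    exact Real.sInf_nonneg (hbdd Ω')
  -- the differential of φ, as a real continuous linear map
  set Φ' : ℂ → (ℂ →L[ℝ] ℂ) :=
    fun z => ((1 : ℂ →L[ℂ] ℂ).smulRight (deriv φ z)).restrictScalars ℝ with hΦ'
  have hder : ∀ z ∈ Ω', HasFDerivAt φ (Φ' z) z := fun z hz =>
    ((hφd.differentiableAt (hΩ'.mem_nhds hz)).hasDerivAt.hasFDerivAt).restrictScalars ℝ
  -- change of variables
  have hCOV : ∀ h : ℂ → ℝ, ∫ z in Ω, h z = ∫ z in Ω', ‖deriv φ z‖ ^ 2 * h (φ z) := by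
    intro h
    rw [← hφim, integral_image_eq_integral_abs_det_fderiv_smul volume hΩ'.measurableSet
      (fun z hz => (hder z hz).hasFDerivWithinAt) hφinj]
    refine setIntegral_congr_fun hΩ'.measurableSet fun z hz => ?_
    simp only [smul_eq_mul]
    rw [det_aux]
  -- the main bound: λ₁(Ω') / K² ≤ λ₁(Ω)
  have hmain : firstEigenvalue Ω' / K ^ 2 ≤ firstEigenvalue Ω := by
    obtain ⟨f₀, hf₀, hf₀ne⟩ := exists_testFun hΩ hΩc.nonempty
    refine le_csInf ⟨_, ⟨f₀, ⟨hf₀, hf₀ne⟩, rfl⟩⟩ ?_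
    rintro r ⟨f, ⟨hftest, hfne⟩, rfl⟩
    obtain ⟨hfsm, hfcs, hfsupp⟩ := hftest
    -- the transplanted test function g on Ω'
    set C := tsupport f with hC
    have hCcomp : IsCompact C := hfcs
    have hCΩ : C ⊆ Ω := hfsupp
    set K₀ : Set ℂ := Ω' ∩ φ ⁻¹' C with hK₀
    -- K₀ is compact
    have hK₀comp : IsCompact K₀ := by
      set e : Ω' → ℂ := Ω'.restrict φ with he
      have hecont : Continuous e := hφd.continuousOn.restrict
      have heinj : Function.Injective e := fun a b hab => Subtype.ext (hφinj a.2 b.2 hab)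
      have heopen : IsOpenMap e := by
        have hana : AnalyticOnNhd ℂ φ Ω' := hφd.analyticOnNhd hΩ'
        rcases hana.is_constant_or_isOpen hΩ'c.isPreconnected with hconst | hopen
        · exfalso
          obtain ⟨w, hw⟩ := hconst
          obtain ⟨z₀, hz₀⟩ := hΩ'c.nonempty
          obtain ⟨R, hR, hball⟩ := Metric.isOpen_iff.1 hΩ' z₀ hz₀
          have h1 : z₀ + R/2 ∈ Ω' := by
            apply hball
            simp [Metric.mem_ball, dist_eq_norm]
            rw [abs_of_nonneg (by linarith)]
            linarith
          have h2 := hφinj h1 hz₀ (by rw [hw _ hz₀, hw _ h1])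
          have : (R/2 : ℂ) = 0 := by
            have := congrArg (· - z₀) h2
            simpa using this
          rw [Complex.ext_iff] at this
          simp at this
          linarith
        · intro U hU
          have himg : e '' U = φ '' (Subtype.val '' U) := by
            rw [Set.image_image]; rfl
          rw [himg]
          exact hopen _ (by rintro w ⟨u, hu, rfl⟩; exact u.2)
            (hΩ'.isOpenMap_subtype_val U hU)
      have hemb : Topology.IsOpenEmbedding e :=
        .of_continuous_injective_isOpenMap hecont heinj heopen
      have hrange : Set.range e = Ω := by
        exact (Set.range_domRestrict φ Ω').trans hφim
      have hpre : IsCompact (e ⁻¹' C) :=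
        hemb.isEmbedding.isInducing.isCompact_preimage' hCcomp (hrange ▸ hCΩ)
      have himg : Subtype.val '' (e ⁻¹' C) = K₀ := by
        ext z
        constructor
        · rintro ⟨w, hw, rfl⟩; exact ⟨w.2, hw⟩
        · rintro ⟨h1, h2⟩; exact ⟨⟨z, h1⟩, h2, rfl⟩
      rw [← himg]
      exact hpre.image continuous_subtype_val
    have hK₀Ω' : K₀ ⊆ Ω' := Set.inter_subset_left
    set g : ℂ → ℝ := fun z => if z ∈ Ω' then f (φ z) else 0 with hg
    have hgon : ∀ w ∈ Ω', g w = f (φ w) := by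
      intro w hw
      simp only [hg]
      rw [if_pos hw]
    have hsupp : Function.support g ⊆ K₀ := by
      intro z hz
      by_cases h : z ∈ Ω'
      · refine ⟨h, subset_tsupport f ?_⟩
        rw [Function.mem_support, hgon z h] at hz
        exact hz
      · rw [Function.mem_support] at hz
        exact absurd (by simp only [hg]; rw [if_neg h]) hz
    have hgsmooth : ContDiff ℝ (⊤ : ℕ∞) g := by
      rw [contDiff_iff_contDiffAt]
      intro z
      by_cases h : z ∈ Ω'
      · have h1 : ContDiffAt ℝ (⊤ : ℕ∞) (f ∘ φ) z :=
          (hfsm.contDiffAt).comp z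
            (((hφd.analyticOnNhd hΩ' z h).restrictScalars).contDiffAt)
        exact h1.congr_of_eventuallyEq
          (Filter.eventually_of_mem (hΩ'.mem_nhds h) fun w hw => hgon w hw)
      · have hz' : z ∈ K₀ᶜ := fun hzK => h (hK₀Ω' hzK)
        have hev : g =ᶠ[nhds z] (fun _ => (0 : ℝ)) :=
          Filter.eventually_of_mem (hK₀comp.isClosed.isOpen_compl.mem_nhds hz')
            (fun w hw => Function.notMem_support.mp (fun hs => hw (hsupp hs)))
        exact contDiffAt_const.congr_of_eventuallyEq hev
    have hgts : tsupport g ⊆ K₀ := closure_minimal hsupp hK₀comp.isClosed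
    have hgcs : HasCompactSupport g :=
      HasCompactSupport.of_support_subset_isCompact hK₀comp hsupp
    have hgtest : IsTestFun Ω' g := ⟨hgsmooth, hgcs, hgts.trans hK₀Ω'⟩
    -- notation for the four integrals
    set E := ∫ z in Ω, ‖fderiv ℝ f z‖ ^ 2 with hE
    set M := ∫ z in Ω, (f z) ^ 2 with hM
    set M' := ∫ z in Ω', (g z) ^ 2 with hM'
    have hEnonneg : 0 ≤ E := integral_nonneg fun z => sq_nonneg _
    -- positivity of M
    have hMpos : 0 < M := by
      have hfc2 : HasCompactSupport (fun z => (f z) ^ 2) := by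
        have := hfcs.comp_left (g := fun y : ℝ => y ^ 2) (by simp)
        simpa [Function.comp_def] using this
      rw [hM, setIntegral_pos_iff_support_of_nonneg_ae
        (Filter.Eventually.of_forall fun z => sq_nonneg _)
        (((hfsm.continuous.pow 2).integrable_of_hasCompactSupport hfc2).integrableOn)]
      have hsuppf : Function.support (fun z => (f z) ^ 2) = Function.support f := by
        ext z; simp [pow_eq_zero_iff]
      rw [hsuppf]
      have h1 : Function.support f ∩ Ω = Function.support f :=
        Set.inter_eq_left.mpr ((subset_tsupport f).trans hfsupp)
      rw [h1]
      apply (hfsm.continuous.isOpen_support).measure_pos volume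
      · rw [Function.support_nonempty_iff]
        exact hfne
    -- the derivative computation for g on Ω'
    have hfd : ∀ z ∈ Ω', fderiv ℝ g z = (fderiv ℝ f (φ z)).comp (Φ' z) := by
      intro z hz
      have hev : g =ᶠ[nhds z] (f ∘ φ) :=
        Filter.eventually_of_mem (hΩ'.mem_nhds hz) fun w hw => hgon w hw
      rw [Filter.EventuallyEq.fderiv_eq hev]
      have hφz : DifferentiableAt ℝ φ z :=
        (hφd.differentiableAt (hΩ'.mem_nhds hz)).restrictScalars ℝ
      rw [fderiv_comp z ((hfsm.differentiable (by simp)).differentiableAt) hφz]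
      congr 1
      exact (hder z hz).fderiv
    -- Dirichlet energy is conformally invariant
    have hE' : ∫ z in Ω', ‖fderiv ℝ g z‖ ^ 2 = E := by
      rw [hE, hCOV (fun w => ‖fderiv ℝ f w‖ ^ 2)]
      refine setIntegral_congr_fun hΩ'.measurableSet fun z hz => ?_
      rw [hfd z hz, norm_comp_aux _ _ (hφ' z hz)]
      ring
    -- the mass bound
    have hgc2 : HasCompactSupport (fun z => (g z) ^ 2) := by
      have := hgcs.comp_left (g := fun y : ℝ => y ^ 2) (by simp)
      simpa [Function.comp_def] using this
    have hgint : Integrable (fun z => (g z) ^ 2) (volume.restrict Ω') :=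
      ((hgsmooth.continuous.pow 2).integrable_of_hasCompactSupport hgc2).integrableOn
    have hMle : M ≤ K ^ 2 * M' := by
      rw [hM, hM', hCOV (fun w => (f w) ^ 2), ← integral_const_mul]
      apply integral_mono_of_nonneg
      · exact Filter.Eventually.of_forall fun z => mul_nonneg (sq_nonneg _) (sq_nonneg _)
      · exact hgint.const_mul _
      · filter_upwards [haeK, ae_restrict_mem hΩ'.measurableSet] with z h1 h2
        have hgz : g z = f (φ z) := hgon z h2
        calc ‖deriv φ z‖ ^ 2 * f (φ z) ^ 2 ≤ K ^ 2 * f (φ z) ^ 2 := by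
              have : ‖deriv φ z‖ ^ 2 ≤ K ^ 2 := by
                apply pow_le_pow_left₀ (norm_nonneg _) h1
              exact mul_le_mul_of_nonneg_right this (sq_nonneg _)
        _ = K ^ 2 * g z ^ 2 := by rw [hgz]
    have hM'pos : 0 < M' := by nlinarith
    have hgne : g ≠ 0 := by
      intro h
      rw [h] at hM'
      simp at hM'
      rw [hM'] at hM'pos
      exact lt_irrefl 0 hM'pos
    -- Rayleigh bound
    have hray : firstEigenvalue Ω' ≤ E / M' := by
      have h0 : (∫ z in Ω', ‖fderiv ℝ g z‖ ^ 2) / (∫ z in Ω', (g z) ^ 2) ∈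
          ((fun f => (∫ z in Ω', ‖fderiv ℝ f z‖ ^ 2) / (∫ z in Ω', (f z) ^ 2)) ''
            {f : ℂ → ℝ | IsTestFun Ω' f ∧ f ≠ 0}) := ⟨g, ⟨hgtest, hgne⟩, rfl⟩
      have h1 := csInf_le hbddBelow h0
      rwa [hE', ← hM'] at h1
    calc firstEigenvalue Ω' / K ^ 2 ≤ (E / M') / K ^ 2 :=
          (div_le_div_iff_of_pos_right hK2pos).mpr hray
    _ = E / (M' * K ^ 2) := by rw [div_div]
    _ ≤ E / M := by
          apply div_le_div_of_nonneg_left hEnonneg hMpos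
          linarith
  -- conclude by algebra
  have halg : (1 - K ^ 2) / K ^ 2 * firstEigenvalue Ω' =
      firstEigenvalue Ω' / K ^ 2 - firstEigenvalue Ω' := by
    field_simp
  rw [ge_iff_le, halg]
  linarith
end
end
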